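/- arXiv:1405.7909 — 3 statements merged into one kernel-verified Lean document; each statement's English description precedes it below -/
import Mathlib

section
/- Let α ∈ (0,1) and p ∈ [1,∞). There is a constant c = c(α) > 0 such that for every t ∈ ℝ and every f ∈ L^p(ℝ), ‖ ∫_{|y|≤1/100} |e^{it((x+y)³−x³)} − 1| · |y|^{−1−α} · |f(x+y)| dy ‖_{L^p_x({|x|≤100})} ≤ c |t| ‖f‖_{L^p}. -/
open MeasureTheory Filter Topology Set
open scoped ENNReal FourierTransform

noncomputable section

/-- The Airy unitary group: `U t u₀ = (e^{itξ³} û₀(ξ))∨`. -/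
def airy (t : ℝ) (u₀ : ℝ → ℂ) : ℝ → ℂ :=
  𝓕⁻ (fun ξ : ℝ => Complex.exp (Complex.I * (t : ℂ) * (ξ : ℂ) ^ 3) * 𝓕 u₀ ξ)

/-- The homogeneous derivative of order `s`: `Dˢ f = (|ξ|ˢ f̂(ξ))∨`. -/
def Dhom (s : ℝ) (f : ℝ → ℂ) : ℝ → ℂ :=
  𝓕⁻ (fun ξ : ℝ => ((|ξ| ^ s : ℝ) : ℂ) * 𝓕 f ξ)

/-- Membership in the `L²`-based Sobolev space `Hˢ(ℝ)`. -/
def InHs (s : ℝ) (f : ℝ → ℂ) : Prop :=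
  MemLp f 2 volume ∧
    MemLp (fun ξ : ℝ => (((1 + ξ ^ 2) ^ (s / 2) : ℝ) : ℂ) * 𝓕 f ξ) 2 volume

/-- The constant `c_α = π^{1/2} 2^{-α} Γ(-α/2)/Γ(3/2)`. -/
def cConst (α : ℝ) : ℝ :=
  Real.sqrt Real.pi * 2 ^ (-α) * Real.Gamma (-(α / 2)) / Real.Gamma (3 / 2)

/-- The truncated integral defining `Φ_{t,α}`. -/
def PhiApprox (t α : ℝ) (f : ℝ → ℂ) (x ε : ℝ) : ℂ :=
  (cConst α)⁻¹ • ∫ y in {y : ℝ | ε ≤ |y|},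
    (Complex.exp (Complex.I * (t : ℂ) * (((x + y) ^ 3 - x ^ 3 : ℝ) : ℂ)) - 1)
      * f (x + y) / ((|y| ^ (1 + α) : ℝ) : ℂ)

/-- `Φ_{t,α}(f)(x) = lim_{ε→0⁺} (1/c_α) ∫_{|y|≥ε} (e^{it((x+y)³-x³)}-1)|y|^{-1-α} f(x+y) dy`. -/
def Phi (t α : ℝ) (f : ℝ → ℂ) (x : ℝ) : ℂ :=
  limUnder (𝓝[>] (0 : ℝ)) (PhiApprox t α f x)

/-- The truncated integral defining Stein's derivative `D_α`. -/
def DalphaApprox (α : ℝ) (f : ℝ → ℂ) (x ε : ℝ) : ℂ :=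
  (cConst α)⁻¹ • ∫ y in {y : ℝ | ε ≤ |y|},
    (f (x + y) - f x) / ((|y| ^ (1 + α) : ℝ) : ℂ)

/-- Stein's derivative `D_α f(x) = lim_{ε→0⁺} (1/c_α) ∫_{|y|≥ε} (f(x+y)-f(x))|y|^{-1-α} dy`. -/
def Dalpha (α : ℝ) (f : ℝ → ℂ) (x : ℝ) : ℂ :=
  limUnder (𝓝[>] (0 : ℝ)) (DalphaApprox α f x)

lemma my_norm_exp_I_mul_sub_one_le (s : ℝ) : ‖Complex.exp (Complex.I * s) - 1‖ ≤ |s| := by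
  have he : Complex.exp (Complex.I * s) = (Real.cos s : ℂ) + (Real.sin s : ℂ) * Complex.I := by
    rw [mul_comm, Complex.exp_mul_I, Complex.ofReal_cos, Complex.ofReal_sin]
  set z := Complex.exp (Complex.I * s) - 1 with hz
  have hre : z.re = Real.cos s - 1 := by
    rw [hz, he]; simp [Real.cos]
  have him : z.im = Real.sin s := by
    rw [hz, he]; simp [Real.sin]
  have hsq : ‖z‖ ^ 2 = (Real.cos s - 1) ^ 2 + Real.sin s ^ 2 := by
    rw [Complex.sq_norm, Complex.normSq_apply, hre, him]; ring
  have hb : ‖z‖ ^ 2 ≤ s ^ 2 := by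
    rw [hsq]
    nlinarith [Real.one_sub_sq_div_two_le_cos (x := s), Real.sin_sq_add_cos_sq s,
      Real.cos_le_one s]
  calc ‖z‖ = Real.sqrt (‖z‖ ^ 2) := (Real.sqrt_sq (norm_nonneg _)).symm
    _ ≤ Real.sqrt (s ^ 2) := Real.sqrt_le_sqrt hb
    _ = |s| := Real.sqrt_sq_eq_abs s

lemma my_holder_step {k h : ℝ → ℝ≥0∞} (hk : Measurable k) (hh : Measurable h) {r : ℝ}
    (hr : 1 ≤ r) :
    (∫⁻ y, k y * h y) ^ r ≤ (∫⁻ y, k y) ^ (r - 1) * ∫⁻ y, k y * h y ^ r := by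
  rcases eq_or_lt_of_le hr with h1 | h1
  · simp [← h1]
  · have hr0 : (0 : ℝ) < r := lt_trans one_pos h1
    set q := r / (r - 1) with hqdef
    have hq : q.HolderConjugate r := (Real.HolderConjugate.conjExponent h1).symm
    have hq0 : q ≠ 0 := ne_of_gt hq.pos
    have hinv : 1 / q + 1 / r = 1 := by
      rw [one_div, one_div]; exact hq.inv_add_inv_eq_one
    have key : ∫⁻ y, k y * h y ≤
        (∫⁻ y, k y) ^ (1 / q) * (∫⁻ y, k y * h y ^ r) ^ (1 / r) := by
      have := ENNReal.lintegral_mul_le_Lp_mul_Lq volume hq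
        ((hk.pow_const (1 / q)).aemeasurable)
        (((hk.pow_const (1 / r)).mul hh).aemeasurable)
      calc ∫⁻ y, k y * h y
          = ∫⁻ y, ((fun y => k y ^ (1 / q)) * fun y => k y ^ (1 / r) * h y) y := by
            refine lintegral_congr fun y => ?_
            simp only [Pi.mul_apply]
            rw [← mul_assoc, ← ENNReal.rpow_add_of_nonneg _ _ (one_div_nonneg.mpr hq.pos.le) (one_div_nonneg.mpr hr0.le),
              hinv, ENNReal.rpow_one]
        _ ≤ (∫⁻ y, (k y ^ (1 / q)) ^ q) ^ (1 / q) *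
            (∫⁻ y, (k y ^ (1 / r) * h y) ^ r) ^ (1 / r) := this
        _ = (∫⁻ y, k y) ^ (1 / q) * (∫⁻ y, k y * h y ^ r) ^ (1 / r) := by
            congr 1
            · congr 1; refine lintegral_congr fun y => ?_
              rw [← ENNReal.rpow_mul, one_div, inv_mul_cancel₀ hq0, ENNReal.rpow_one]
            · congr 1; refine lintegral_congr fun y => ?_
              rw [ENNReal.mul_rpow_of_nonneg _ _ (le_of_lt hr0), ← ENNReal.rpow_mul, one_div,
                inv_mul_cancel₀ (ne_of_gt hr0), ENNReal.rpow_one]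
    calc (∫⁻ y, k y * h y) ^ r
        ≤ ((∫⁻ y, k y) ^ (1 / q) * (∫⁻ y, k y * h y ^ r) ^ (1 / r)) ^ r :=
          ENNReal.rpow_le_rpow key (le_of_lt hr0)
      _ = (∫⁻ y, k y) ^ (r - 1) * ∫⁻ y, k y * h y ^ r := by
          rw [ENNReal.mul_rpow_of_nonneg _ _ (le_of_lt hr0), ← ENNReal.rpow_mul,
            ← ENNReal.rpow_mul, one_div, one_div, inv_mul_cancel₀ (ne_of_gt hr0),
            ENNReal.rpow_one]
          congr 2
          rw [hqdef, inv_div, div_mul_cancel₀ _ hr0.ne']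

lemma my_conv_bound {k g : ℝ → ℝ≥0∞} (hk : Measurable k) (hg : Measurable g) {r : ℝ}
    (hr : 1 ≤ r) (hA : (∫⁻ y, k y) ≠ ⊤) :
    ∫⁻ x, (∫⁻ y, k y * g (x + y)) ^ r ≤ (∫⁻ y, k y) ^ r * ∫⁻ z, g z ^ r := by
  set A := ∫⁻ y, k y with hAdef
  have hA1 : A ^ (r - 1) ≠ ⊤ := ENNReal.rpow_ne_top_of_nonneg (by linarith) hA
  calc ∫⁻ x, (∫⁻ y, k y * g (x + y)) ^ r
      ≤ ∫⁻ x, A ^ (r - 1) * ∫⁻ y, k y * g (x + y) ^ r := by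
        refine lintegral_mono fun x => ?_
        exact my_holder_step hk (hg.comp (measurable_const_add x)) hr
    _ = A ^ (r - 1) * ∫⁻ x, ∫⁻ y, k y * g (x + y) ^ r := lintegral_const_mul' _ _ hA1
    _ = A ^ (r - 1) * ∫⁻ y, ∫⁻ x, k y * g (x + y) ^ r := by
        rw [lintegral_lintegral_swap]
        exact ((hk.comp measurable_snd).mul
          ((hg.comp measurable_add).pow_const r)).aemeasurable
    _ = A ^ (r - 1) * ∫⁻ y, k y * ∫⁻ x, g (x + y) ^ r := by
        congr 1; refine lintegral_congr fun y => ?_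
        exact lintegral_const_mul _ ((hg.comp (measurable_add_const y)).pow_const r)
    _ = A ^ (r - 1) * ∫⁻ y, k y * ∫⁻ z, g z ^ r := by
        congr 1; refine lintegral_congr fun y => ?_
        congr 1
        exact lintegral_add_right_eq_self (fun z => g z ^ r) y
    _ = A ^ (r - 1) * (A * ∫⁻ z, g z ^ r) := by
        congr 1; exact lintegral_mul_const _ hk
    _ = A ^ r * ∫⁻ z, g z ^ r := by
        rw [← mul_assoc]
        congr 1
        have h2 : A ^ (r - 1 + 1) = A ^ (r - 1) * A ^ (1 : ℝ) :=
          ENNReal.rpow_add_of_nonneg _ _ (by linarith) zero_le_one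
        rw [ENNReal.rpow_one] at h2
        rw [← h2]
        norm_num

lemma my_kernel_ne_top {α : ℝ} (hα0 : 0 < α) (hα1 : α < 1) :
    (∫⁻ y in {y : ℝ | |y| ≤ 1 / 100}, ENNReal.ofReal (|y| ^ (-α))) ≠ ⊤ := by
  have hc : (0 : ℝ) < 1 / 100 := by norm_num
  set c : ℝ := 1 / 100 with hcdef
  set h : ℝ → ℝ := fun y => |y| ^ (-α) with hhdef
  have hIoo : IntegrableOn (fun y : ℝ => y ^ (-α)) (Ioo 0 c) :=
    (intervalIntegral.integrableOn_Ioo_rpow_iff hc).2 (by linarith)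
  have hpos : IntegrableOn h (Ioo 0 c) := by
    refine hIoo.congr_fun (fun y hy => ?_) measurableSet_Ioo
    simp [h, abs_of_pos hy.1]
  have hIoc : IntegrableOn h (Ioc 0 c) := (integrableOn_Ioc_iff_integrableOn_Ioo (by simp)).2 hpos
  have hJ : IntervalIntegrable h volume 0 c := by
    rw [intervalIntegrable_iff, Set.uIoc_of_le hc.le]; exact hIoc
  have hJ2 : IntervalIntegrable h volume 0 (-c) := by
    have h2 := (IntervalIntegrable.iff_comp_neg (by simp)).1 hJ
    have he : (fun x => h (-x)) = h := by funext x; simp [h]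
    rw [he] at h2
    simpa using h2
  have hneg : IntegrableOn h (Ioc (-c) 0) := by
    rw [intervalIntegrable_iff] at hJ2
    rwa [Set.uIoc_comm, Set.uIoc_of_le (by linarith)] at hJ2
  have hIcc : IntegrableOn h (Icc (-c) c) := by
    rw [integrableOn_Icc_iff_integrableOn_Ioc]
    rw [← Set.Ioc_union_Ioc_eq_Ioc (by linarith : -c ≤ (0:ℝ)) hc.le]
    exact hneg.union hIoc
  have hset : {y : ℝ | |y| ≤ c} = Icc (-c) c := by ext y; simp [abs_le]
  rw [show {y : ℝ | |y| ≤ 1 / 100} = Icc (-c) c from hset]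
  refine ne_of_lt (lt_of_le_of_lt ?_ hIcc.2)
  exact lintegral_mono fun y => Real.ofReal_le_enorm _

/-- For `α ∈ (0,1)` and `p ∈ [1,∞)` there is `c = c(α) > 0` such that for
every `t ∈ ℝ` and every `f ∈ L^p(ℝ)`,
`‖∫_{|y|≤1/100} |e^{it((x+y)³−x³)}−1|·|y|^{−1−α}·|f(x+y)| dy‖_{L^p_x({|x|≤100})}
  ≤ c|t|‖f‖_{L^p}`. -/
theorem near_region_small_x_bound (α : ℝ) (hα : α ∈ Set.Ioo (0 : ℝ) 1) (p : ℝ≥0∞)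
    (hp : 1 ≤ p) (hp' : p ≠ ⊤) :
    ∃ c : ℝ, 0 < c ∧
      ∀ (t : ℝ) (f : ℝ → ℂ), MemLp f p volume →
        eLpNorm
          (fun x : ℝ => ∫ y in {y : ℝ | |y| ≤ 1 / 100},
            ‖Complex.exp (Complex.I * (t : ℂ) * (((x + y) ^ 3 - x ^ 3 : ℝ) : ℂ)) - 1‖
              * ‖f (x + y)‖ / |y| ^ (1 + α)) p
          (volume.restrict {x : ℝ | |x| ≤ 100})
          ≤ ENNReal.ofReal (c * |t|) * eLpNorm f p volume := by
  obtain ⟨hα0, hα1⟩ := hα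
  set S : Set ℝ := {y : ℝ | |y| ≤ 1 / 100} with hSdef
  have hS : MeasurableSet S := measurableSet_le measurable_abs measurable_const
  set X : Set ℝ := {x : ℝ | |x| ≤ 100} with hXdef
  have hX : MeasurableSet X := measurableSet_le measurable_abs measurable_const
  set w : ℝ → ℝ≥0∞ := fun y => ENNReal.ofReal (|y| ^ (-α)) with hwdef
  have hwm : Measurable w := (measurable_abs.pow measurable_const).ennreal_ofReal
  set k : ℝ → ℝ≥0∞ := S.indicator w with hkdef
  have hkm : Measurable k := hwm.indicator hS
  set A : ℝ≥0∞ := ∫⁻ y, k y with hAdef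
  have hAS : A = ∫⁻ y in S, w y := lintegral_indicator hS w
  have hA : A ≠ ⊤ := by rw [hAS]; exact my_kernel_ne_top hα0 hα1
  refine ⟨40000 * (A.toReal + 1), by positivity, ?_⟩
  intro t f hf
  have hp0 : p ≠ 0 := by
    intro h; rw [h] at hp; exact absurd hp (by simp)
  rw [eLpNorm_eq_lintegral_rpow_enorm_toReal hp0 hp', eLpNorm_eq_lintegral_rpow_enorm_toReal hp0 hp']
  set r := p.toReal with hrdef
  have hr : 1 ≤ r := by
    rw [hrdef, ← ENNReal.toReal_one]
    exact ENNReal.toReal_mono hp' hp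
  have hr0 : (0 : ℝ) < r := lt_of_lt_of_le one_pos hr
  set g : ℝ → ℝ≥0∞ := fun z => (‖f z‖₊ : ℝ≥0∞) with hgdef
  have hgae : AEMeasurable g volume := hf.1.enorm
  set g' := hgae.mk g with hg'def
  have hg'm : Measurable g' := hgae.measurable_mk
  have hgg' : g =ᵐ[volume] g' := hgae.ae_eq_mk
  set c' : ℝ≥0∞ := ENNReal.ofReal (40000 * |t|) with hc'def
  have hc'top : c' ≠ ⊤ := ENNReal.ofReal_ne_top
  -- step A
  have hy0ae : ∀ᵐ y : ℝ, y ≠ 0 := by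
    rw [ae_iff]
    simpa using measure_singleton (0 : ℝ)
  have stepA : ∀ᵐ x ∂(volume.restrict X),
      (‖∫ y in S, ‖Complex.exp (Complex.I * (t : ℂ) * (((x + y) ^ 3 - x ^ 3 : ℝ) : ℂ)) - 1‖
          * ‖f (x + y)‖ / |y| ^ (1 + α)‖₊ : ℝ≥0∞) ≤ c' * ∫⁻ y, k y * g' (x + y) := by
    filter_upwards [ae_restrict_mem hX] with x hx
    have hxb : |x| ≤ 100 := hx
    have inner : ∀ᵐ y ∂(volume.restrict S),
        (‖‖Complex.exp (Complex.I * (t : ℂ) * (((x + y) ^ 3 - x ^ 3 : ℝ) : ℂ)) - 1‖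
            * ‖f (x + y)‖ / |y| ^ (1 + α)‖₊ : ℝ≥0∞) ≤ c' * (w y * g (x + y)) := by
      filter_upwards [ae_restrict_mem hS, ae_restrict_of_ae hy0ae] with y hyS hy0
      have hyb : |y| ≤ 1 / 100 := hyS
      have hyabs : (0 : ℝ) < |y| := abs_pos.2 hy0
      set ρ : ℝ := ‖Complex.exp (Complex.I * (t : ℂ) * (((x + y) ^ 3 - x ^ 3 : ℝ) : ℂ)) - 1‖
          * ‖f (x + y)‖ / |y| ^ (1 + α) with hρdef
      have hρ0 : 0 ≤ ρ := by
        apply div_nonneg (mul_nonneg (norm_nonneg _) (norm_nonneg _))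
        positivity
      have h1 : ‖Complex.exp (Complex.I * (t : ℂ) * (((x + y) ^ 3 - x ^ 3 : ℝ) : ℂ)) - 1‖
          ≤ |t * ((x + y) ^ 3 - x ^ 3)| := by
        have h := my_norm_exp_I_mul_sub_one_le (t * ((x + y) ^ 3 - x ^ 3))
        have : Complex.I * ((t * ((x + y) ^ 3 - x ^ 3) : ℝ) : ℂ)
            = Complex.I * (t : ℂ) * (((x + y) ^ 3 - x ^ 3 : ℝ) : ℂ) := by
          push_cast; ring
        rwa [this] at h
      have habs : |3 * x ^ 2 + 3 * x * y + y ^ 2| ≤ 40000 := by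
        have hx' := abs_le.1 hxb
        have hy' := abs_le.1 hyb
        rw [abs_le]
        constructor <;>
          nlinarith [mul_nonneg (by linarith : (0:ℝ) ≤ 100 - x) (by linarith : (0:ℝ) ≤ 1/100 - y),
            mul_nonneg (by linarith : (0:ℝ) ≤ 100 + x) (by linarith : (0:ℝ) ≤ 1/100 + y),
            mul_nonneg (by linarith : (0:ℝ) ≤ 100 - x) (by linarith : (0:ℝ) ≤ 1/100 + y),
            mul_nonneg (by linarith : (0:ℝ) ≤ 100 + x) (by linarith : (0:ℝ) ≤ 1/100 - y),
            sq_nonneg x, sq_nonneg y]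
      have h2 : |t * ((x + y) ^ 3 - x ^ 3)| ≤ |t| * (40000 * |y|) := by
        rw [abs_mul]
        have h3 : (x + y) ^ 3 - x ^ 3 = y * (3 * x ^ 2 + 3 * x * y + y ^ 2) := by ring
        have h4 : |(x + y) ^ 3 - x ^ 3| ≤ 40000 * |y| := by
          rw [h3, abs_mul]
          calc |y| * |3 * x ^ 2 + 3 * x * y + y ^ 2| ≤ |y| * 40000 :=
                mul_le_mul_of_nonneg_left habs (abs_nonneg y)
            _ = 40000 * |y| := mul_comm _ _
        exact mul_le_mul_of_nonneg_left h4 (abs_nonneg t)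
      have hαpos : (0 : ℝ) < |y| ^ α := Real.rpow_pos_of_pos hyabs α
      have key : ρ ≤ 40000 * |t| * (|y| ^ (-α) * ‖f (x + y)‖) := by
        rw [hρdef]
        have hd : |y| ^ (1 + α) = |y| * |y| ^ α := by
          rw [Real.rpow_add hyabs, Real.rpow_one]
        calc ‖Complex.exp (Complex.I * (t : ℂ) * (((x + y) ^ 3 - x ^ 3 : ℝ) : ℂ)) - 1‖
              * ‖f (x + y)‖ / |y| ^ (1 + α)
            ≤ |t| * (40000 * |y|) * ‖f (x + y)‖ / |y| ^ (1 + α) := by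
              have hdpos : (0 : ℝ) < |y| ^ (1 + α) := Real.rpow_pos_of_pos hyabs _
              exact (div_le_div_iff_of_pos_right hdpos).2
                (mul_le_mul_of_nonneg_right (h1.trans h2) (norm_nonneg _))
          _ = 40000 * |t| * (|y| ^ (-α) * ‖f (x + y)‖) := by
              rw [hd, Real.rpow_neg (abs_nonneg y)]
              field_simp
      calc (‖ρ‖₊ : ℝ≥0∞) = ENNReal.ofReal ρ := (Real.enorm_eq_ofReal hρ0)
        _ ≤ ENNReal.ofReal (40000 * |t| * (|y| ^ (-α) * ‖f (x + y)‖)) :=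
            ENNReal.ofReal_le_ofReal key
        _ = c' * (w y * g (x + y)) := by
            rw [ENNReal.ofReal_mul (by positivity),
              ENNReal.ofReal_mul (by positivity : (0:ℝ) ≤ |y| ^ (-α))]
            congr 1
            congr 1
            exact ofReal_norm _
    have htrans : (fun y => g (x + y)) =ᵐ[volume] fun y => g' (x + y) := by
      have hmp : MeasurePreserving (fun y : ℝ => x + y) volume volume :=
        measurePreserving_add_left volume x
      exact hgg'.comp_tendsto hmp.quasiMeasurePreserving.tendsto_ae
    calc (‖∫ y in S, ‖Complex.exp (Complex.I * (t : ℂ) * (((x + y) ^ 3 - x ^ 3 : ℝ) : ℂ)) - 1‖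
            * ‖f (x + y)‖ / |y| ^ (1 + α)‖₊ : ℝ≥0∞)
        ≤ ∫⁻ y in S, (‖‖Complex.exp (Complex.I * (t : ℂ) * (((x + y) ^ 3 - x ^ 3 : ℝ) : ℂ)) - 1‖
            * ‖f (x + y)‖ / |y| ^ (1 + α)‖₊ : ℝ≥0∞) := enorm_integral_le_lintegral_enorm _
      _ ≤ ∫⁻ y in S, c' * (w y * g (x + y)) := lintegral_mono_ae inner
      _ = c' * ∫⁻ y in S, w y * g (x + y) := lintegral_const_mul' _ _ hc'top
      _ = c' * ∫⁻ y, k y * g (x + y) := by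
          congr 1
          rw [← lintegral_indicator hS]
          refine lintegral_congr fun y => ?_
          by_cases hy : y ∈ S
          · simp [hkdef, Set.indicator_of_mem hy]
          · simp [hkdef, Set.indicator_of_notMem hy]
      _ = c' * ∫⁻ y, k y * g' (x + y) := by
          congr 1
          refine lintegral_congr_ae (htrans.mono fun y hy => ?_)
          show k y * g (x + y) = k y * g' (x + y)
          rw [show g (x + y) = g' (x + y) from hy]
  -- step B
  set G : ℝ≥0∞ := ∫⁻ z, g' z ^ r with hGdef
  have hGg : ∫⁻ z, g z ^ r = G := lintegral_congr_ae (hgg'.mono fun z hz => by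
    show g z ^ r = g' z ^ r
    rw [hz])
  have main : (∫⁻ x in X, (‖∫ y in S,
      ‖Complex.exp (Complex.I * (t : ℂ) * (((x + y) ^ 3 - x ^ 3 : ℝ) : ℂ)) - 1‖
        * ‖f (x + y)‖ / |y| ^ (1 + α)‖₊ : ℝ≥0∞) ^ r) ≤ c' ^ r * (A ^ r * G) := by
    calc ∫⁻ x in X, (‖∫ y in S,
          ‖Complex.exp (Complex.I * (t : ℂ) * (((x + y) ^ 3 - x ^ 3 : ℝ) : ℂ)) - 1‖
            * ‖f (x + y)‖ / |y| ^ (1 + α)‖₊ : ℝ≥0∞) ^ r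
        ≤ ∫⁻ x in X, (c' * ∫⁻ y, k y * g' (x + y)) ^ r :=
          lintegral_mono_ae (stepA.mono fun x hx => ENNReal.rpow_le_rpow hx hr0.le)
      _ = ∫⁻ x in X, c' ^ r * (∫⁻ y, k y * g' (x + y)) ^ r :=
          lintegral_congr fun x => ENNReal.mul_rpow_of_nonneg _ _ hr0.le
      _ ≤ ∫⁻ x, c' ^ r * (∫⁻ y, k y * g' (x + y)) ^ r := setLIntegral_le_lintegral _ _
      _ = c' ^ r * ∫⁻ x, (∫⁻ y, k y * g' (x + y)) ^ r :=
          lintegral_const_mul' _ _ (ENNReal.rpow_ne_top_of_nonneg hr0.le hc'top)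
      _ ≤ c' ^ r * (A ^ r * G) := mul_le_mul_right (my_conv_bound hkm hg'm hr hA) _
  calc (∫⁻ x in X, (‖∫ y in S,
        ‖Complex.exp (Complex.I * (t : ℂ) * (((x + y) ^ 3 - x ^ 3 : ℝ) : ℂ)) - 1‖
          * ‖f (x + y)‖ / |y| ^ (1 + α)‖₊ : ℝ≥0∞) ^ r) ^ (1 / r)
      ≤ (c' ^ r * (A ^ r * G)) ^ (1 / r) := ENNReal.rpow_le_rpow main (by positivity)
    _ = c' * A * G ^ (1 / r) := by
        rw [ENNReal.mul_rpow_of_nonneg _ _ (by positivity : (0:ℝ) ≤ 1 / r),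
          ENNReal.mul_rpow_of_nonneg _ _ (by positivity : (0:ℝ) ≤ 1 / r),
          ← ENNReal.rpow_mul, ← ENNReal.rpow_mul, mul_one_div_cancel hr0.ne',
          ENNReal.rpow_one, ENNReal.rpow_one, ← mul_assoc]
    _ ≤ ENNReal.ofReal (40000 * (A.toReal + 1) * |t|) * (∫⁻ z, (‖f z‖₊ : ℝ≥0∞) ^ r) ^ (1 / r) := by
        have hcA : c' * A ≤ ENNReal.ofReal (40000 * (A.toReal + 1) * |t|) := by
          have h5 : c' * A = ENNReal.ofReal (40000 * |t| * A.toReal) := by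
            conv_lhs => rw [← ENNReal.ofReal_toReal hA]
            rw [hc'def, ← ENNReal.ofReal_mul (by positivity)]
          rw [h5]
          exact ENNReal.ofReal_le_ofReal
            (by nlinarith [abs_nonneg t, ENNReal.toReal_nonneg (a := A)])
        have hGG : G ^ (1 / r) = (∫⁻ z, (‖f z‖₊ : ℝ≥0∞) ^ r) ^ (1 / r) := by
          rw [← hGg]
        rw [hGG]
        exact mul_le_mul_left hcA _
end
end

section
/- Let α ∈ (0,1) and p ∈ (1,∞). There is a constant c = c(α,p) > 0 such that for every t ∈ ℝ and every f with f ∈ L^p(ℝ) and |x|^{2α} f ∈ L^p(ℝ), ‖ ∫_{|y| ≤ |x|^{−2}} |t| |x|² |f(x+y)| |y|^{−α} dy ‖_{L^p_x({|x|≥100})} ≤ c |t| ( ‖|x|^{2α} f‖_{L^p} + ‖f‖_{L^p} ). -/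
open MeasureTheory Filter Topology Set
open scoped ENNReal FourierTransform

noncomputable section

namespace NearRegionAux

/-- One-sided power integral bound. -/
lemma lint_Icc_rpow {α : ℝ} (hα0 : 0 < α) (hα1 : α < 1) {r : ℝ} (hr : 0 ≤ r) :
    ∫⁻ y in Set.Icc (0 : ℝ) r, ENNReal.ofReal (|y| ^ (-α)) ≤
      ENNReal.ofReal (r ^ (1 - α) / (1 - α)) := by
  have h1α : (0 : ℝ) < 1 - α := by linarith
  have hint : IntegrableOn (fun y : ℝ => y ^ (-α)) (Set.Icc 0 r) volume := by
    have h := intervalIntegral.intervalIntegrable_rpow' (a := 0) (b := r) (r := -α) (by linarith)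
    rw [intervalIntegrable_iff_integrableOn_Icc_of_le hr] at h
    exact h
  have h1 : ∫⁻ y in Set.Icc (0 : ℝ) r, ENNReal.ofReal (|y| ^ (-α)) =
      ∫⁻ y in Set.Icc (0 : ℝ) r, ENNReal.ofReal (y ^ (-α)) := by
    refine setLIntegral_congr_fun measurableSet_Icc (fun y hy => ?_)
    rw [abs_of_nonneg hy.1]
  rw [h1, ← ofReal_integral_eq_lintegral_ofReal hint ?_]
  · apply ENNReal.ofReal_le_ofReal
    rw [MeasureTheory.integral_Icc_eq_integral_Ioc, ← intervalIntegral.integral_of_le hr,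
      integral_rpow (Or.inl (by linarith))]
    rw [Real.zero_rpow (by linarith : -α + 1 ≠ 0)]
    rw [show -α + 1 = 1 - α by ring]
    simp
  · refine (ae_restrict_iff' measurableSet_Icc).2 (ae_of_all _ fun y hy => ?_)
    exact Real.rpow_nonneg hy.1 _

/-- Two-sided power integral bound. -/
lemma lint_abs_rpow_le {α : ℝ} (hα0 : 0 < α) (hα1 : α < 1) {r : ℝ} (hr : 0 ≤ r) :
    ∫⁻ y in {y : ℝ | |y| ≤ r}, ENNReal.ofReal (|y| ^ (-α)) ≤
      ENNReal.ofReal (2 / (1 - α) * r ^ (1 - α)) := by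
  have h1α : (0 : ℝ) < 1 - α := by linarith
  have hset : {y : ℝ | |y| ≤ r} = Set.Icc (-r) r := by
    ext y; simp [abs_le]
  have hneg : ∫⁻ y in Set.Icc (-r) (0 : ℝ), ENNReal.ofReal (|y| ^ (-α)) =
      ∫⁻ y in Set.Icc (0 : ℝ) r, ENNReal.ofReal (|y| ^ (-α)) := by
    rw [← lintegral_indicator measurableSet_Icc, ← lintegral_indicator measurableSet_Icc]
    have hmap : ∫⁻ y, (Set.Icc (-r) (0:ℝ)).indicator
        (fun y => ENNReal.ofReal (|y| ^ (-α))) y =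
        ∫⁻ y, (Set.Icc (-r) (0:ℝ)).indicator (fun y => ENNReal.ofReal (|y| ^ (-α))) (-y) := by
      have hvol : Measure.map (⇑(MeasurableEquiv.neg ℝ)) (volume : Measure ℝ) = volume :=
        Measure.map_neg_eq_self volume
      conv_lhs => rw [← hvol, lintegral_map_equiv _ (MeasurableEquiv.neg ℝ)]
      rfl
    rw [hmap]
    congr 1
    funext y
    by_cases hy : y ∈ Set.Icc (0:ℝ) r
    · rw [Set.indicator_of_mem (by constructor <;> [linarith [hy.2]; linarith [hy.1]] :
        -y ∈ Set.Icc (-r) (0:ℝ)), Set.indicator_of_mem hy, abs_neg]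
    · rw [Set.indicator_of_notMem hy, Set.indicator_of_notMem (fun hmem => hy ?_)]
      exact ⟨by linarith [hmem.2], by linarith [hmem.1]⟩
  calc ∫⁻ y in {y : ℝ | |y| ≤ r}, ENNReal.ofReal (|y| ^ (-α))
      ≤ ∫⁻ y in Set.Icc (-r) (0:ℝ) ∪ Set.Icc (0:ℝ) r, ENNReal.ofReal (|y| ^ (-α)) := by
        apply lintegral_mono_set
        rw [hset]
        intro y hy
        rcases le_or_gt y 0 with h | h
        · exact Or.inl ⟨hy.1, h⟩
        · exact Or.inr ⟨h.le, hy.2⟩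
    _ ≤ (∫⁻ y in Set.Icc (-r) (0:ℝ), ENNReal.ofReal (|y| ^ (-α))) +
        ∫⁻ y in Set.Icc (0:ℝ) r, ENNReal.ofReal (|y| ^ (-α)) := lintegral_union_le _ _ _
    _ ≤ ENNReal.ofReal (r ^ (1 - α) / (1 - α)) + ENNReal.ofReal (r ^ (1 - α) / (1 - α)) := by
        rw [hneg]
        exact add_le_add (lint_Icc_rpow hα0 hα1 hr) (lint_Icc_rpow hα0 hα1 hr)
    _ = ENNReal.ofReal (2 / (1 - α) * r ^ (1 - α)) := by
        rw [← ENNReal.ofReal_add (by positivity) (by positivity)]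
        congr 1
        field_simp
        ring

/-- Hölder splitting of a kernel integral. -/
lemma holder_split {pr : ℝ} (hpr : 1 < pr) {u v : ℝ → ℝ≥0∞}
    (hu : Measurable u) (hv : Measurable v) :
    ∫⁻ y, u y * v y ≤
      (∫⁻ y, u y) ^ (1 - 1 / pr) * (∫⁻ y, u y * v y ^ pr) ^ (1 / pr) := by
  have hpr0 : (0 : ℝ) < pr := by linarith
  have hq : (Real.conjExponent pr).HolderConjugate pr :=
    (Real.HolderConjugate.conjExponent hpr).symm
  set qr : ℝ := Real.conjExponent pr with hqr
  have hqr0 : (0 : ℝ) < qr := hq.pos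
  have hinv : 1 / qr = 1 - 1 / pr := by
    have := hq.inv_add_inv_eq_one
    rw [one_div, one_div]; linarith
  have key := ENNReal.lintegral_mul_le_Lp_mul_Lq (volume : Measure ℝ) hq
    (f := fun y => u y ^ (1 / qr)) (g := fun y => u y ^ (1 / pr) * v y)
    ((hu.pow_const _).aemeasurable) (((hu.pow_const _).mul hv).aemeasurable)
  have e1 : ∀ y : ℝ, (fun y => u y ^ (1 / qr)) y * (fun y => u y ^ (1 / pr) * v y) y
      = u y * v y := by
    intro y
    have : u y ^ (1 / qr) * (u y ^ (1 / pr) * v y) = u y ^ (1 / qr + 1 / pr) * v y := by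
      rw [ENNReal.rpow_add_of_nonneg _ _ (by positivity) (by positivity), mul_assoc]
    rw [this]
    have : 1 / qr + 1 / pr = 1 := by rw [hinv]; ring
    rw [this, ENNReal.rpow_one]
  have e2 : ∀ y : ℝ, ((fun y => u y ^ (1 / qr)) y) ^ qr = u y := by
    intro y
    rw [← ENNReal.rpow_mul, one_div, inv_mul_cancel₀ hqr0.ne', ENNReal.rpow_one]
  have e3 : ∀ y : ℝ, ((fun y => u y ^ (1 / pr) * v y) y) ^ pr = u y * v y ^ pr := by
    intro y
    rw [ENNReal.mul_rpow_of_nonneg _ _ hpr0.le, ← ENNReal.rpow_mul, one_div,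
      inv_mul_cancel₀ hpr0.ne', ENNReal.rpow_one]
  calc ∫⁻ y, u y * v y
      = ∫⁻ y, (fun y => u y ^ (1 / qr)) y * (fun y => u y ^ (1 / pr) * v y) y := by
        apply lintegral_congr; intro y; rw [e1]
    _ ≤ (∫⁻ y, ((fun y => u y ^ (1 / qr)) y) ^ qr) ^ (1 / qr) *
        (∫⁻ y, ((fun y => u y ^ (1 / pr) * v y) y) ^ pr) ^ (1 / pr) := key
    _ = (∫⁻ y, u y) ^ (1 - 1 / pr) * (∫⁻ y, u y * v y ^ pr) ^ (1 / pr) := by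
        rw [hinv] at *
        congr 1
        · congr 1; apply lintegral_congr; intro y; rw [e2]
        · congr 1; apply lintegral_congr; intro y; rw [e3]

end NearRegionAux

set_option maxHeartbeats 1000000 in
/-- For `α ∈ (0,1)` and `p ∈ (1,∞)` there is `c = c(α,p) > 0` such that for
every `t ∈ ℝ` and every `f` with `f ∈ L^p(ℝ)` and `|x|^{2α} f ∈ L^p(ℝ)`,
`‖∫_{|y|≤|x|^{−2}} |t||x|²|f(x+y)||y|^{−α} dy‖_{L^p_x({|x|≥100})}
  ≤ c|t|(‖|x|^{2α}f‖_{L^p} + ‖f‖_{L^p})`. -/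
theorem near_region_large_x_small_y_bound (α : ℝ) (hα : α ∈ Set.Ioo (0 : ℝ) 1) (p : ℝ≥0∞)
    (hp : 1 < p) (hp' : p ≠ ⊤) :
    ∃ c : ℝ, 0 < c ∧
      ∀ (t : ℝ) (f : ℝ → ℂ), MemLp f p volume →
        MemLp (fun x : ℝ => ((|x| ^ (2 * α) : ℝ) : ℂ) * f x) p volume →
        eLpNorm
          (fun x : ℝ => ∫ y in {y : ℝ | |y| ≤ (|x| ^ 2)⁻¹},
            |t| * |x| ^ 2 * ‖f (x + y)‖ / |y| ^ α) p
          (volume.restrict {x : ℝ | 100 ≤ |x|})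
          ≤ ENNReal.ofReal (c * |t|) *
              (eLpNorm (fun x : ℝ => ((|x| ^ (2 * α) : ℝ) : ℂ) * f x) p volume
                + eLpNorm f p volume) := by
  obtain ⟨hα0, hα1⟩ := hα
  have h1α : (0:ℝ) < 1 - α := by linarith
  refine ⟨32 / (1 - α), by positivity, ?_⟩
  intro t f hf _hwf
  -- replace `f` by a measurable representative `g`
  obtain ⟨g, hgm, hfg⟩ : ∃ g : ℝ → ℂ, Measurable g ∧ f =ᵐ[volume] g :=
    ⟨hf.1.mk f, hf.1.stronglyMeasurable_mk.measurable, hf.1.ae_eq_mk⟩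
  have hLHS : (fun x : ℝ => ∫ y in {y : ℝ | |y| ≤ (|x| ^ 2)⁻¹},
        |t| * |x| ^ 2 * ‖f (x + y)‖ / |y| ^ α)
      = fun x : ℝ => ∫ y in {y : ℝ | |y| ≤ (|x| ^ 2)⁻¹},
        |t| * |x| ^ 2 * ‖g (x + y)‖ / |y| ^ α := by
    funext x
    refine integral_congr_ae (ae_restrict_of_ae ?_)
    have h' : (f ∘ fun y : ℝ => x + y) =ᵐ[volume] (g ∘ fun y : ℝ => x + y) :=
      (measurePreserving_add_left volume x).quasiMeasurePreserving.ae_eq_comp hfg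
    filter_upwards [h'] with y hy
    simp only [Function.comp] at hy
    rw [hy]
  have hRHS1 : eLpNorm (fun x : ℝ => ((|x| ^ (2 * α) : ℝ) : ℂ) * f x) p volume
      = eLpNorm (fun x : ℝ => ((|x| ^ (2 * α) : ℝ) : ℂ) * g x) p volume := by
    refine eLpNorm_congr_ae ?_
    filter_upwards [hfg] with x hx
    rw [hx]
  rw [hLHS, hRHS1, eLpNorm_congr_ae hfg]
  clear hLHS hRHS1 hfg hf _hwf
  -- setup
  have hp0 : p ≠ 0 := (lt_trans zero_lt_one hp).ne'
  set pr : ℝ := p.toReal with hprdef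
  have hpr : 1 < pr := by
    rw [hprdef, ← ENNReal.toReal_one]
    exact ENNReal.toReal_strict_mono hp' hp
  have hpr0 : (0:ℝ) < pr := by linarith
  set S : Set ℝ := {x : ℝ | 100 ≤ |x|} with hSdef
  have hSm : MeasurableSet S := measurableSet_le measurable_const measurable_abs
  set kR : ℝ → ℝ → ℝ := fun x y =>
    if |y| ≤ (|x| ^ 2)⁻¹ then |t| * |x| ^ 2 / (|y| ^ α * (1 + |x + y| ^ (2 * α))) else 0
    with hkRdef
  set k : ℝ → ℝ → ℝ≥0∞ := fun x y => ENNReal.ofReal (kR x y) with hkdef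
  have hkm2 : Measurable fun q : ℝ × ℝ => k q.1 q.2 := by
    apply Measurable.ennreal_ofReal
    simp only [hkRdef]
    apply Measurable.ite
    · exact measurableSet_le (measurable_abs.comp measurable_snd)
        (((measurable_abs.comp measurable_fst).pow_const 2).inv)
    · apply Measurable.div
      · exact measurable_const.mul ((measurable_abs.comp measurable_fst).pow_const 2)
      · apply Measurable.mul
        · exact (Real.continuous_rpow_const hα0.le).measurable.comp
            (measurable_abs.comp measurable_snd)
        · exact measurable_const.add
            ((Real.continuous_rpow_const (by positivity)).measurable.comp
              (measurable_abs.comp (measurable_fst.add measurable_snd)))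
    · exact measurable_const
  set W : ℝ → ℝ := fun z => (1 + |z| ^ (2 * α)) * ‖g z‖ with hWdef
  have hW0 : ∀ z, 0 ≤ W z := fun z => by
    simp only [hWdef]
    positivity
  have hWm : Measurable W := by
    apply Measurable.mul
    · exact measurable_const.add
        ((Real.continuous_rpow_const (by positivity)).measurable.comp measurable_abs)
    · exact hgm.norm
  set Gt : ℝ → ℝ≥0∞ := fun z => ENNReal.ofReal (W z) with hGtdef
  have hGtm : Measurable Gt := hWm.ennreal_ofReal
  -- row (kernel mass in `y`) bound
  have h24 : (2:ℝ) ^ (2 * α) ≤ 4 := by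
    have h1 : (2:ℝ) ^ (2 * α) ≤ (2:ℝ) ^ ((2:ℕ) : ℝ) :=
      Real.rpow_le_rpow_of_exponent_le one_le_two (by push_cast; linarith)
    rw [Real.rpow_natCast] at h1
    norm_num at h1
    exact h1
  have row : ∀ x ∈ S, ∫⁻ y, k x y ≤ ENNReal.ofReal (8 / (1 - α) * |t|) := by
    intro x hx
    have hx100 : (100:ℝ) ≤ |x| := hx
    have hxpos : (0:ℝ) < |x| := by linarith
    have hP : (0:ℝ) < |x| ^ (2*α) := Real.rpow_pos_of_pos hxpos _
    set Cx : ℝ := |t| * |x| ^ 2 * (4 * (|x| ^ (2*α))⁻¹) with hCx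
    have hCx0 : 0 ≤ Cx := by positivity
    have hsm : MeasurableSet {y : ℝ | |y| ≤ (|x| ^ 2)⁻¹} :=
      measurableSet_le measurable_abs measurable_const
    have hpt : ∀ y : ℝ, k x y ≤ ({y : ℝ | |y| ≤ (|x| ^ 2)⁻¹}).indicator
        (fun y => ENNReal.ofReal Cx * ENNReal.ofReal (|y| ^ (-α))) y := by
      intro y
      simp only [hkdef, hkRdef]
      by_cases hmem : |y| ≤ (|x| ^ 2)⁻¹
      · rw [if_pos hmem, Set.indicator_of_mem
          (show y ∈ {y : ℝ | |y| ≤ (|x| ^ 2)⁻¹} from hmem), ← ENNReal.ofReal_mul hCx0]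
        apply ENNReal.ofReal_le_ofReal
        by_cases hy0 : y = 0
        · subst hy0
          rw [abs_zero, Real.zero_rpow hα0.ne', Real.zero_rpow (by linarith : -α ≠ 0)]
          simp
        · have hyabs : (0:ℝ) < |y| := abs_pos.mpr hy0
          have hb : (0:ℝ) < |y| ^ α := Real.rpow_pos_of_pos hyabs _
          have hw0 : (0:ℝ) ≤ |x + y| ^ (2*α) := Real.rpow_nonneg (abs_nonneg _) _
          have hxy : |x| / 2 ≤ |x + y| := by
            have hinv1 : ((|x| ^ 2)⁻¹ : ℝ) ≤ 1 := by
              have h1 : (1:ℝ) ≤ |x| ^ 2 := by nlinarith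
              rw [inv_le_one_iff₀]
              right; exact h1
            have h2 : |x| - |y| ≤ |x + y| := by
              have h3 := abs_sub_abs_le_abs_sub x (-y)
              simp only [abs_neg, sub_neg_eq_add] at h3
              exact h3
            have hy1 : |y| ≤ 1 := le_trans hmem hinv1
            linarith
          have hPP : |x| ^ (2*α) / 4 ≤ 1 + |x + y| ^ (2*α) := by
            have h2 : (|x| / 2) ^ (2*α) ≤ |x + y| ^ (2*α) :=
              Real.rpow_le_rpow (by positivity) hxy (by positivity)
            rw [Real.div_rpow hxpos.le (by norm_num : (0:ℝ) ≤ 2)] at h2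
            have h3 : |x| ^ (2*α) / 4 ≤ |x| ^ (2*α) / (2:ℝ) ^ (2*α) := by
              apply div_le_div_of_nonneg_left hP.le
              · positivity
              · exact h24
            linarith
          have heq : |t| * |x| ^ 2 / (|y| ^ α * (|x| ^ (2*α) / 4)) = Cx * |y| ^ (-α) := by
            have h4i : (|y| ^ α * (|x| ^ (2*α) / 4))⁻¹ = 4 * (|x| ^ (2*α))⁻¹ * (|y| ^ α)⁻¹ := by
              rw [mul_inv, div_eq_mul_inv, mul_inv, inv_inv]
              ring
            rw [hCx, Real.rpow_neg (abs_nonneg y), div_eq_mul_inv, h4i]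
            ring
          calc |t| * |x| ^ 2 / (|y| ^ α * (1 + |x + y| ^ (2*α)))
              ≤ |t| * |x| ^ 2 / (|y| ^ α * (|x| ^ (2*α) / 4)) := by
                apply div_le_div_of_nonneg_left (by positivity) (by positivity)
                exact mul_le_mul_of_nonneg_left hPP hb.le
            _ = Cx * |y| ^ (-α) := heq
      · rw [if_neg hmem, Set.indicator_of_notMem
          (show y ∉ {y : ℝ | |y| ≤ (|x| ^ 2)⁻¹} from hmem)]
        simp
    calc ∫⁻ y, k x y
        ≤ ∫⁻ y, ({y : ℝ | |y| ≤ (|x| ^ 2)⁻¹}).indicator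
            (fun y => ENNReal.ofReal Cx * ENNReal.ofReal (|y| ^ (-α))) y := lintegral_mono hpt
      _ = ENNReal.ofReal Cx *
          ∫⁻ y in {y : ℝ | |y| ≤ (|x| ^ 2)⁻¹}, ENNReal.ofReal (|y| ^ (-α)) := by
          rw [lintegral_indicator hsm, lintegral_const_mul' _ _ ENNReal.ofReal_ne_top]
      _ ≤ ENNReal.ofReal Cx * ENNReal.ofReal (2 / (1-α) * ((|x| ^ 2)⁻¹) ^ (1-α)) :=
          mul_le_mul_right (NearRegionAux.lint_abs_rpow_le hα0 hα1 (by positivity)) _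
      _ ≤ ENNReal.ofReal (8 / (1-α) * |t|) := by
          rw [← ENNReal.ofReal_mul hCx0]
          apply ENNReal.ofReal_le_ofReal
          have e1 : (((|x| ^ 2 : ℝ))⁻¹) ^ (1-α) = (|x| ^ (2*(1-α)))⁻¹ := by
            rw [Real.inv_rpow (by positivity)]
            congr 1
            rw [← Real.rpow_natCast |x| 2, ← Real.rpow_mul hxpos.le]
            norm_num
          have e2 : |x| ^ (2*α) * |x| ^ (2*(1-α)) = |x| ^ 2 := by
            rw [← Real.rpow_add hxpos, show 2*α + 2*(1-α) = ((2:ℕ):ℝ) by push_cast; ring,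
              Real.rpow_natCast]
          have hQ : (0:ℝ) < |x| ^ (2*(1-α)) := Real.rpow_pos_of_pos hxpos _
          rw [hCx, e1, ← e2]
          apply le_of_eq
          field_simp
          ring
  -- column bound
  have col : ∀ z : ℝ, (∫⁻ x in S, k x (z - x)) ≤ ENNReal.ofReal (32 / (1-α) * |t|) := by
    intro z
    set sz : ℝ := 4 * ((|z| ^ 2)⁻¹) with hszdef
    have hsz0 : (0:ℝ) ≤ sz := by positivity
    set Cz : ℝ := 4 * |t| * |z| ^ 2 * (|z| ^ (2*α))⁻¹ with hCzdef
    have hCz0 : (0:ℝ) ≤ Cz := by positivity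
    have hszm : MeasurableSet {u : ℝ | |u| ≤ sz} :=
      measurableSet_le measurable_abs measurable_const
    have hpt : ∀ x : ℝ, S.indicator (fun x => k x (z - x)) x ≤
        ({u : ℝ | |u| ≤ sz}).indicator
          (fun u => ENNReal.ofReal Cz * ENNReal.ofReal (|u| ^ (-α))) (x - z) := by
      intro x
      by_cases hxS : x ∈ S
      swap
      · rw [Set.indicator_of_notMem hxS]; exact zero_le
      rw [Set.indicator_of_mem hxS]
      simp only [hkdef, hkRdef]
      by_cases hcond : |z - x| ≤ (|x| ^ 2)⁻¹
      swap
      · rw [if_neg hcond]; simp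
      rw [if_pos hcond]
      have hx100 : (100:ℝ) ≤ |x| := hxS
      have hxpos : (0:ℝ) < |x| := by linarith
      have hxinv : ((|x| ^ 2)⁻¹ : ℝ) ≤ 1/2 := by
        have h1 : (2:ℝ) ≤ |x|^2 := by nlinarith
        have h2 : ((|x| ^ 2)⁻¹ : ℝ) ≤ (2:ℝ)⁻¹ := by
          apply inv_anti₀ (by norm_num) h1
        linarith [h2]
      have hzx : |z - x| ≤ 1/2 := le_trans hcond hxinv
      have hz99 : (99:ℝ) ≤ |z| := by
        have h2 : |x| - |z| ≤ |x - z| := abs_sub_abs_le_abs_sub x z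
        rw [abs_sub_comm] at h2
        linarith
      have hzpos : (0:ℝ) < |z| := by linarith
      have hxz2 : |z|/2 ≤ |x| := by
        have h2 : |z| - |x| ≤ |z - x| := abs_sub_abs_le_abs_sub z x
        linarith
      have hx2z : |x| ≤ 2* |z| := by
        have h2 : |x| - |z| ≤ |x - z| := abs_sub_abs_le_abs_sub x z
        rw [abs_sub_comm] at h2
        linarith
      have hmem : x - z ∈ {u : ℝ | |u| ≤ sz} := by
        have h2 : |z|^2/4 ≤ |x|^2 := by nlinarith
        have h3 : ((|x|^2)⁻¹ : ℝ) ≤ (|z|^2/4)⁻¹ := by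
          apply inv_anti₀ (by positivity) h2
        have h4 : ((|z|^2/4)⁻¹ : ℝ) = sz := by
          rw [hszdef]
          field_simp
        show |x - z| ≤ sz
        rw [abs_sub_comm]
        calc |z - x| ≤ (|x|^2)⁻¹ := hcond
          _ ≤ (|z|^2/4)⁻¹ := h3
          _ = sz := h4
      rw [Set.indicator_of_mem hmem, ← ENNReal.ofReal_mul hCz0]
      apply ENNReal.ofReal_le_ofReal
      have hxyz : x + (z - x) = z := by ring
      rw [hxyz]
      by_cases hzx0 : z - x = 0
      · have hxz0 : x - z = 0 := by linarith [hzx0]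
        rw [hzx0, hxz0]
        rw [abs_zero, Real.zero_rpow hα0.ne', Real.zero_rpow (by linarith : -α ≠ 0)]
        simp
      · have hb : (0:ℝ) < |z - x| ^ α := Real.rpow_pos_of_pos (abs_pos.mpr hzx0) _
        have hPz : (0:ℝ) < |z| ^ (2*α) := Real.rpow_pos_of_pos hzpos _
        have hden : |z - x| ^ α * (|z| ^ (2*α)) ≤ |z - x| ^ α * (1 + |z| ^ (2*α)) := by
          nlinarith
        calc |t| * |x| ^ 2 / (|z - x| ^ α * (1 + |z| ^ (2*α)))
            ≤ |t| * (4 * |z| ^ 2) / (|z - x| ^ α * (|z| ^ (2*α))) := by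
              apply div_le_div₀ ?_ ?_ (by positivity) hden
              · positivity
              · have h5 : |x|^2 ≤ 4* |z|^2 := by nlinarith
                have h6 : (0:ℝ) ≤ |t| := abs_nonneg t
                nlinarith
          _ = Cz * |x - z| ^ (-α) := by
              rw [hCzdef, Real.rpow_neg (abs_nonneg _), abs_sub_comm x z]
              field_simp
    calc ∫⁻ x in S, k x (z - x)
        = ∫⁻ x, S.indicator (fun x => k x (z - x)) x := (lintegral_indicator hSm _).symm
      _ ≤ ∫⁻ x, ({u : ℝ | |u| ≤ sz}).indicator
            (fun u => ENNReal.ofReal Cz * ENNReal.ofReal (|u| ^ (-α))) (x - z) :=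
          lintegral_mono hpt
      _ = ∫⁻ u, ({u : ℝ | |u| ≤ sz}).indicator
            (fun u => ENNReal.ofReal Cz * ENNReal.ofReal (|u| ^ (-α))) u :=
          lintegral_sub_right_eq_self _ z
      _ = ENNReal.ofReal Cz * ∫⁻ u in {u : ℝ | |u| ≤ sz}, ENNReal.ofReal (|u| ^ (-α)) := by
          rw [lintegral_indicator hszm, lintegral_const_mul' _ _ ENNReal.ofReal_ne_top]
      _ ≤ ENNReal.ofReal Cz * ENNReal.ofReal (2 / (1-α) * sz ^ (1-α)) :=
          mul_le_mul_right (NearRegionAux.lint_abs_rpow_le hα0 hα1 hsz0) _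
      _ ≤ ENNReal.ofReal (32 / (1-α) * |t|) := by
          rw [← ENNReal.ofReal_mul hCz0]
          apply ENNReal.ofReal_le_ofReal
          by_cases hz0 : z = 0
          · have hCz' : Cz = 0 := by
              rw [hCzdef, hz0]
              simp
            rw [hCz', zero_mul]
            positivity
          · have hzpos : (0:ℝ) < |z| := abs_pos.mpr hz0
            have e1 : sz ^ (1-α) = 4 ^ (1-α) * (|z| ^ (2*(1-α)))⁻¹ := by
              rw [hszdef, Real.mul_rpow (by norm_num) (by positivity),
                Real.inv_rpow (by positivity)]
              congr 2
              rw [← Real.rpow_natCast |z| 2, ← Real.rpow_mul hzpos.le]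
              norm_num
            have e2 : |z| ^ (2*α) * |z| ^ (2*(1-α)) = |z| ^ 2 := by
              rw [← Real.rpow_add hzpos, show 2*α + 2*(1-α) = ((2:ℕ):ℝ) by push_cast; ring,
                Real.rpow_natCast]
            have h4 : (4:ℝ) ^ (1-α) ≤ 4 := by
              calc (4:ℝ) ^ (1-α) ≤ (4:ℝ) ^ (1:ℝ) :=
                    Real.rpow_le_rpow_of_exponent_le (by norm_num) (by linarith)
                _ = 4 := Real.rpow_one 4
            have hP : (0:ℝ) < |z| ^ (2*α) := Real.rpow_pos_of_pos hzpos _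
            have hQ : (0:ℝ) < |z| ^ (2*(1-α)) := Real.rpow_pos_of_pos hzpos _
            rw [hCzdef, e1, ← e2]
            have expand : 4* |t| *(|z|^(2*α) * |z|^(2*(1-α)))*(|z|^(2*α))⁻¹ *
                (2/(1-α)*(4^(1-α)*(|z|^(2*(1-α)))⁻¹)) = 8 * 4^(1-α) / (1-α) * |t| := by
              field_simp
              ring
            rw [expand]
            have h32 : 8 * (4:ℝ)^(1-α) ≤ 32 := by nlinarith
            calc 8*4^(1-α)/(1-α)* |t| = 8*4^(1-α)*(|t|/(1-α)) := by ring
              _ ≤ 32*(|t|/(1-α)) :=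
                  mul_le_mul_of_nonneg_right h32 (div_nonneg (abs_nonneg t) h1α.le)
              _ = 32/(1-α)* |t| := by ring
  -- pointwise domination of the inner integral
  have step1 : ∀ x : ℝ,
      (‖∫ y in {y : ℝ | |y| ≤ (|x| ^ 2)⁻¹}, |t| * |x| ^ 2 * ‖g (x + y)‖ / |y| ^ α‖₊ : ℝ≥0∞)
        ≤ ∫⁻ y, k x y * Gt (x + y) := by
    intro x
    have hsm : MeasurableSet {y : ℝ | |y| ≤ (|x| ^ 2)⁻¹} :=
      measurableSet_le measurable_abs measurable_const
    have hnn : ∀ y : ℝ, 0 ≤ |t| * |x| ^ 2 * ‖g (x + y)‖ / |y| ^ α := fun y => by positivity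
    by_cases hint : Integrable (fun y => |t| * |x| ^ 2 * ‖g (x + y)‖ / |y| ^ α)
        (volume.restrict {y : ℝ | |y| ≤ (|x| ^ 2)⁻¹})
    swap
    · rw [integral_undef hint]
      simp
    rw [← enorm_eq_nnnorm, Real.enorm_eq_ofReal (integral_nonneg hnn),
      ofReal_integral_eq_lintegral_ofReal hint (ae_of_all _ hnn),
      ← lintegral_indicator hsm]
    apply lintegral_mono
    intro y
    by_cases hy : y ∈ {y : ℝ | |y| ≤ (|x| ^ 2)⁻¹}
    · have hy' : |y| ≤ (|x| ^ 2)⁻¹ := hy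
      rw [Set.indicator_of_mem hy]
      simp only [hkdef, hkRdef, hGtdef, hWdef]
      rw [if_pos hy']
      rw [← ENNReal.ofReal_mul (by positivity)]
      apply ENNReal.ofReal_le_ofReal
      have hw : (0:ℝ) ≤ |x + y| ^ (2*α) := Real.rpow_nonneg (abs_nonneg _) _
      by_cases hb : |y| ^ α = 0
      · rw [hb]
        simp
      · have hb' : (0:ℝ) < |y| ^ α :=
          lt_of_le_of_ne (Real.rpow_nonneg (abs_nonneg _) _) (Ne.symm hb)
        have h1w : (0:ℝ) < 1 + |x + y| ^ (2*α) := by linarith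
        apply le_of_eq
        field_simp
    · rw [Set.indicator_of_notMem hy]
      exact zero_le
  -- Hölder + row bound + translation
  have key : ∀ x ∈ S,
      ((‖∫ y in {y : ℝ | |y| ≤ (|x| ^ 2)⁻¹},
          |t| * |x| ^ 2 * ‖g (x + y)‖ / |y| ^ α‖₊ : ℝ≥0∞)) ^ pr
        ≤ ENNReal.ofReal (8 / (1-α) * |t|) ^ (pr - 1) *
          ∫⁻ z, k x (z - x) * Gt z ^ pr := by
    intro x hx
    have hkxm : Measurable (k x) := hkm2.comp measurable_prodMk_left
    have hvm : Measurable fun y => Gt (x + y) :=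
      hGtm.comp (measurable_const.add measurable_id)
    have h2 := NearRegionAux.holder_split hpr hkxm hvm
    have h1 := (step1 x).trans h2
    have etr : (∫⁻ y, k x y * Gt (x + y) ^ pr) = ∫⁻ z, k x (z - x) * Gt z ^ pr := by
      rw [← lintegral_add_left_eq_self (fun z => k x (z - x) * Gt z ^ pr) x]
      apply lintegral_congr
      intro y
      simp only [add_sub_cancel_left]
    refine le_trans (ENNReal.rpow_le_rpow h1 hpr0.le) ?_
    rw [ENNReal.mul_rpow_of_nonneg _ _ hpr0.le, ← ENNReal.rpow_mul, ← ENNReal.rpow_mul,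
      show (1 - 1/pr) * pr = pr - 1 by field_simp,
      show 1/pr * pr = 1 by field_simp, ENNReal.rpow_one, etr]
    exact mul_le_mul_left (ENNReal.rpow_le_rpow (row x hx) (by linarith)) _
  -- Tonelli
  have humeas : Measurable fun q : ℝ × ℝ => k q.1 (q.2 - q.1) * Gt q.2 ^ pr := by
    apply Measurable.mul
    · exact hkm2.comp (measurable_fst.prodMk (measurable_snd.sub measurable_fst))
    · exact ENNReal.continuous_rpow_const.measurable.comp (hGtm.comp measurable_snd)
  have tonelli :
      (∫⁻ x in S, ∫⁻ z, k x (z - x) * Gt z ^ pr) =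
        ∫⁻ z, ∫⁻ x in S, k x (z - x) * Gt z ^ pr :=
    lintegral_lintegral_swap humeas.aemeasurable
  have colstep : ∀ z : ℝ, (∫⁻ x in S, k x (z - x) * Gt z ^ pr) ≤
      ENNReal.ofReal (32 / (1-α) * |t|) * Gt z ^ pr := by
    intro z
    rw [lintegral_mul_const' (Gt z ^ pr) _
      (ENNReal.rpow_ne_top_of_nonneg hpr0.le ENNReal.ofReal_ne_top)]
    exact mul_le_mul_left (col z) _
  -- main lintegral bound
  have main : (∫⁻ x in S, (‖∫ y in {y : ℝ | |y| ≤ (|x| ^ 2)⁻¹},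
        |t| * |x| ^ 2 * ‖g (x + y)‖ / |y| ^ α‖₊ : ℝ≥0∞) ^ pr) ≤
      ENNReal.ofReal (8/(1-α)* |t|) ^ (pr-1) *
        (ENNReal.ofReal (32/(1-α)* |t|) * ∫⁻ z, Gt z ^ pr) := by
    refine le_trans (setLIntegral_mono' hSm key) ?_
    rw [lintegral_const_mul' _ _
      (ENNReal.rpow_ne_top_of_nonneg (by linarith) ENNReal.ofReal_ne_top)]
    apply mul_le_mul_right
    rw [tonelli]
    refine le_trans (lintegral_mono colstep) ?_
    rw [lintegral_const_mul' _ _ ENNReal.ofReal_ne_top]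
  -- identify ∫⁻ Gt^pr with the eLpNorm of W
  have hGW : (∫⁻ z, Gt z ^ pr) ^ (1/pr) = eLpNorm W p volume := by
    rw [eLpNorm_eq_lintegral_rpow_enorm_toReal hp0 hp', ← hprdef]
    congr 1
    apply lintegral_congr
    intro z
    simp only [hGtdef]
    rw [Real.enorm_eq_ofReal (hW0 z)]
  -- triangle inequality for W
  have htri : eLpNorm W p volume ≤
      eLpNorm (fun x : ℝ => ((|x| ^ (2*α) : ℝ) : ℂ) * g x) p volume + eLpNorm g p volume := by
    have hWeq : W = (fun z : ℝ => ‖((|z| ^ (2*α) : ℝ) : ℂ) * g z‖) + fun z : ℝ => ‖g z‖ := by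
      funext z
      simp only [hWdef, Pi.add_apply]
      rw [norm_mul, Complex.norm_real, Real.norm_eq_abs,
        abs_of_nonneg (Real.rpow_nonneg (abs_nonneg _) _)]
      ring
    rw [hWeq]
    refine le_trans (eLpNorm_add_le ?_ ?_ hp.le) ?_
    · exact ((Complex.measurable_ofReal.comp
        ((Real.continuous_rpow_const (by positivity)).measurable.comp
          measurable_abs)).mul hgm).norm.aestronglyMeasurable
    · exact hgm.norm.aestronglyMeasurable
    · rw [eLpNorm_norm, eLpNorm_norm]
  -- final assembly
  rw [eLpNorm_eq_lintegral_rpow_enorm_toReal hp0 hp', ← hprdef]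
  refine le_trans (ENNReal.rpow_le_rpow main (by positivity)) ?_
  have hAle : ENNReal.ofReal (8/(1-α)* |t|) ≤ ENNReal.ofReal (32/(1-α)* |t|) := by
    apply ENNReal.ofReal_le_ofReal
    have ht0 : (0:ℝ) ≤ |t| := abs_nonneg t
    have h8 : (8:ℝ)/(1-α) ≤ 32/(1-α) := by
      have h24' : (0:ℝ) ≤ 24/(1-α) := div_nonneg (by norm_num) h1α.le
      have heq : (32:ℝ)/(1-α) = 8/(1-α) + 24/(1-α) := by ring
      linarith
    nlinarith
  have hprm1 : (0:ℝ) ≤ (pr - 1) * (1/pr) := by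
    apply mul_nonneg (by linarith) (by positivity)
  rw [ENNReal.mul_rpow_of_nonneg _ _ (by positivity : (0:ℝ) ≤ 1/pr),
    ENNReal.mul_rpow_of_nonneg _ _ (by positivity : (0:ℝ) ≤ 1/pr),
    ← ENNReal.rpow_mul, hGW]
  calc ENNReal.ofReal (8/(1-α)* |t|) ^ ((pr-1)*(1/pr)) *
        (ENNReal.ofReal (32/(1-α)* |t|) ^ (1/pr) * eLpNorm W p volume)
      ≤ ENNReal.ofReal (32/(1-α)* |t|) ^ ((pr-1)*(1/pr)) *
        (ENNReal.ofReal (32/(1-α)* |t|) ^ (1/pr) * eLpNorm W p volume) :=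
        mul_le_mul' (ENNReal.rpow_le_rpow hAle hprm1) le_rfl
    _ = ENNReal.ofReal (32/(1-α)* |t|) * eLpNorm W p volume := by
        rw [← mul_assoc, ← ENNReal.rpow_add_of_nonneg _ _ hprm1 (by positivity),
          show (pr-1)*(1/pr) + 1/pr = 1 by field_simp; ring, ENNReal.rpow_one]
    _ ≤ ENNReal.ofReal (32/(1-α)* |t|) *
        (eLpNorm (fun x : ℝ => ((|x| ^ (2*α) : ℝ) : ℂ) * g x) p volume
          + eLpNorm g p volume) := mul_le_mul_right htri _

end
end

section
/- Let α ∈ (0,1) and p ∈ (1,∞). There is a constant c = c(α,p) > 0 such that for every f with f ∈ L^p(ℝ) and |x|^{2α} f ∈ L^p(ℝ), ‖ ∫_{|x|^{−2} ≤ |y| ≤ 1/100} |f(x+y)| |y|^{−1−α} dy ‖_{L^p_x({|x|≥100})} ≤ c ( ‖f‖_{L^p} + ‖|x|^{2α} f‖_{L^p} ). -/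
open MeasureTheory Filter Topology Set
open scoped ENNReal FourierTransform

noncomputable section

namespace NearRegionAux


lemma lint_Ici (α a : ℝ) (hα : 0 < α) (ha : 0 < a) :
    ∫⁻ y in Set.Ici a, ENNReal.ofReal ((|y| ^ (1 + α))⁻¹)
      ≤ ENNReal.ofReal (a ^ (-α) / α) := by
  rw [← setLIntegral_congr (Ioi_ae_eq_Ici (a := a) (μ := volume))]
  have h1 : ∀ᵐ y ∂volume, y ∈ Set.Ioi a →
      ENNReal.ofReal ((|y| ^ (1 + α))⁻¹) = ENNReal.ofReal (y ^ (-(1 + α))) := by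
    refine ae_of_all _ fun y hy => ?_
    have hy0 : 0 < y := ha.trans hy
    rw [abs_of_pos hy0, Real.rpow_neg hy0.le]
  rw [setLIntegral_congr_fun_ae measurableSet_Ioi h1,
    ← ofReal_integral_eq_lintegral_ofReal
      (integrableOn_Ioi_rpow_of_lt (by linarith) ha)
      ((ae_restrict_mem measurableSet_Ioi).mono fun y hy =>
        Real.rpow_nonneg (ha.trans hy).le _),
    integral_Ioi_rpow_of_lt (by linarith) ha]
  apply ENNReal.ofReal_le_ofReal
  have h2 : -(1 + α) + 1 = -α := by ring
  rw [h2, neg_div, div_neg, neg_neg]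

lemma lint_annulus (α a : ℝ) (hα : 0 < α) (ha : 0 < a) :
    ∫⁻ y in {y : ℝ | a ≤ |y|}, ENNReal.ofReal ((|y| ^ (1 + α))⁻¹)
      ≤ ENNReal.ofReal (2 / α * a ^ (-α)) := by
  have hset : {y : ℝ | a ≤ |y|} = Set.Iic (-a) ∪ Set.Ici a := by
    ext y
    simp only [Set.mem_setOf_eq, Set.mem_union, Set.mem_Iic, Set.mem_Ici, le_abs]
    constructor
    · rintro (h | h)
      · right; exact h
      · left; linarith
    · rintro (h | h)
      · right; linarith
      · left; exact h
  rw [hset]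
  refine le_trans (lintegral_union_le _ _ _) ?_
  have hIic : ∫⁻ y in Set.Iic (-a), ENNReal.ofReal ((|y| ^ (1 + α))⁻¹)
      = ∫⁻ y in Set.Ici a, ENNReal.ofReal ((|y| ^ (1 + α))⁻¹) := by
    rw [← lintegral_indicator measurableSet_Iic, ← lintegral_indicator measurableSet_Ici]
    have hneg : ∫⁻ y, (Set.Iic (-a)).indicator
        (fun y : ℝ => ENNReal.ofReal ((|y| ^ (1 + α))⁻¹)) (-y)
        = ∫⁻ y, (Set.Iic (-a)).indicator
        (fun y : ℝ => ENNReal.ofReal ((|y| ^ (1 + α))⁻¹)) y := by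
      have := lintegral_map_equiv (μ := volume)
        (fun y : ℝ => (Set.Iic (-a)).indicator
          (fun y : ℝ => ENNReal.ofReal ((|y| ^ (1 + α))⁻¹)) y)
        (MeasurableEquiv.neg ℝ)
      rw [show ⇑(MeasurableEquiv.neg ℝ) = (Neg.neg : ℝ → ℝ) from rfl,
        Measure.map_neg_eq_self (volume : Measure ℝ)] at this
      exact this.symm
    rw [← hneg]
    refine lintegral_congr fun y => ?_
    by_cases hy : y ∈ Set.Ici a
    · rw [Set.indicator_of_mem hy, Set.indicator_of_mem (by simpa using hy), abs_neg]
    · rw [Set.indicator_of_notMem hy, Set.indicator_of_notMem (by simpa using hy)]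
  rw [hIic]
  refine le_trans (add_le_add (lint_Ici α a hα ha) (lint_Ici α a hα ha)) ?_
  rw [← ENNReal.ofReal_add (by positivity) (by positivity)]
  apply ENNReal.ofReal_le_ofReal
  rw [div_mul_eq_mul_div, mul_comm]
  rw [← add_div]
  ring_nf
  exact le_refl _

lemma lint_shift (α a : ℝ) (hα : 0 < α) (ha : 0 < a) (c : ℝ) :
    ∫⁻ z, ({w : ℝ | a ≤ |w - c|}.indicator
        (fun w => ENNReal.ofReal ((|w - c| ^ (1 + α))⁻¹))) z
      ≤ ENNReal.ofReal (2 / α * a ^ (-α)) := by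
  have hshift := lintegral_add_right_eq_self
    (μ := volume)
    (fun z : ℝ => ({w : ℝ | a ≤ |w - c|}.indicator
        (fun w => ENNReal.ofReal ((|w - c| ^ (1 + α))⁻¹))) z) c
  rw [← hshift]
  have heq : ∀ y : ℝ, ({w : ℝ | a ≤ |w - c|}.indicator
        (fun w => ENNReal.ofReal ((|w - c| ^ (1 + α))⁻¹))) (y + c)
      = ({y : ℝ | a ≤ |y|}.indicator
        (fun y => ENNReal.ofReal ((|y| ^ (1 + α))⁻¹))) y := by
    intro y
    by_cases hy : a ≤ |y|
    · rw [Set.indicator_of_mem (show y + c ∈ {w : ℝ | a ≤ |w - c|} by simpa using hy),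
        Set.indicator_of_mem (show y ∈ {y : ℝ | a ≤ |y|} from hy), add_sub_cancel_right]
    · rw [Set.indicator_of_notMem (show y + c ∉ {w : ℝ | a ≤ |w - c|} by simpa using hy),
        Set.indicator_of_notMem (show y ∉ {y : ℝ | a ≤ |y|} from hy)]
  calc ∫⁻ y, ({w : ℝ | a ≤ |w - c|}.indicator
        (fun w => ENNReal.ofReal ((|w - c| ^ (1 + α))⁻¹))) (y + c)
      = ∫⁻ y, ({y : ℝ | a ≤ |y|}.indicator
        (fun y => ENNReal.ofReal ((|y| ^ (1 + α))⁻¹))) y := lintegral_congr heq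
    _ = ∫⁻ y in {y : ℝ | a ≤ |y|}, ENNReal.ofReal ((|y| ^ (1 + α))⁻¹) := by
        rw [lintegral_indicator]
        exact (isClosed_le continuous_const (continuous_abs)).measurableSet
    _ ≤ ENNReal.ofReal (2 / α * a ^ (-α)) := lint_annulus α a hα ha

lemma inv_sq_rpow (α t : ℝ) (ht : 0 < t) : ((t ^ 2)⁻¹ : ℝ) ^ (-α) = t ^ (2 * α) := by
  have h2 : (0:ℝ) < t ^ 2 := by positivity
  rw [Real.inv_rpow h2.le, Real.rpow_neg h2.le, inv_inv,
    show (2:ℝ) * α = ((2:ℕ):ℝ) * α by norm_num, Real.rpow_mul ht.le, Real.rpow_natCast]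



end NearRegionAux

open NearRegionAux in
set_option maxHeartbeats 2000000 in
/-- For `α ∈ (0,1)` and `p ∈ (1,∞)` there is `c = c(α,p) > 0` such that for
every `f` with `f ∈ L^p(ℝ)` and `|x|^{2α} f ∈ L^p(ℝ)`,
`‖∫_{|x|^{−2}≤|y|≤1/100} |f(x+y)||y|^{−1−α} dy‖_{L^p_x({|x|≥100})}
  ≤ c(‖f‖_{L^p} + ‖|x|^{2α}f‖_{L^p})`. -/
theorem near_region_large_x_large_y_bound (α : ℝ) (hα : α ∈ Set.Ioo (0 : ℝ) 1) (p : ℝ≥0∞)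
    (hp : 1 < p) (hp' : p ≠ ⊤) :
    ∃ c : ℝ, 0 < c ∧
      ∀ (f : ℝ → ℂ), MemLp f p volume →
        MemLp (fun x : ℝ => ((|x| ^ (2 * α) : ℝ) : ℂ) * f x) p volume →
        eLpNorm
          (fun x : ℝ => ∫ y in {y : ℝ | (|x| ^ 2)⁻¹ ≤ |y| ∧ |y| ≤ 1 / 100},
            ‖f (x + y)‖ / |y| ^ (1 + α)) p
          (volume.restrict {x : ℝ | 100 ≤ |x|})
          ≤ ENNReal.ofReal c *
              (eLpNorm f p volume
                + eLpNorm (fun x : ℝ => ((|x| ^ (2 * α) : ℝ) : ℂ) * f x) p volume) := by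
  classical
  obtain ⟨hα0, hα1⟩ := hα
  have hq1 : (1 : ℝ) < p.toReal := by
    rw [← ENNReal.toReal_one]
    exact ENNReal.toReal_strict_mono hp' hp
  set q : ℝ := p.toReal with hqdef
  have hq0 : (0 : ℝ) < q := by linarith
  have hp0 : p ≠ 0 := (zero_lt_one.trans hp).ne'
  refine ⟨8 / α, by positivity, ?_⟩
  intro f hf _hg
  obtain ⟨f', hf'sm, hff'⟩ := hf.1
  have hf'm : Measurable f' := hf'sm.measurable
  have hgg' : (fun x : ℝ => ((|x| ^ (2 * α) : ℝ) : ℂ) * f x)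
      =ᵐ[volume] fun x : ℝ => ((|x| ^ (2 * α) : ℝ) : ℂ) * f' x :=
    hff'.mono fun x hx => by simp only [hx]
  rw [eLpNorm_congr_ae hff', eLpNorm_congr_ae hgg']
  have hFeq : (fun x : ℝ => ∫ y in {y : ℝ | (|x| ^ 2)⁻¹ ≤ |y| ∧ |y| ≤ 1 / 100},
      ‖f (x + y)‖ / |y| ^ (1 + α))
      = fun x : ℝ => ∫ y in {y : ℝ | (|x| ^ 2)⁻¹ ≤ |y| ∧ |y| ≤ 1 / 100},
      ‖f' (x + y)‖ / |y| ^ (1 + α) := by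
    funext x
    refine integral_congr_ae ?_
    have hmp : MeasurePreserving (fun y : ℝ => x + y) volume volume :=
      measurePreserving_add_left volume x
    have h2 : f =ᵐ[Measure.map (fun y : ℝ => x + y) volume] f' := by
      rwa [hmp.map_eq]
    have h1 : (fun y : ℝ => f (x + y)) =ᵐ[volume] fun y => f' (x + y) :=
      ae_eq_comp hmp.measurable.aemeasurable h2
    have h3 : (fun y : ℝ => ‖f (x + y)‖ / |y| ^ (1 + α))
        =ᵐ[volume] fun y => ‖f' (x + y)‖ / |y| ^ (1 + α) :=
      h1.mono fun y hy => by simp only at hy ⊢; rw [hy]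
    exact ae_restrict_of_ae h3
  rw [hFeq]

  clear hFeq hgg' hff' hf _hg hf'sm f
  set T : Set ℝ := {x : ℝ | 100 ≤ |x|} with hTdef
  have hT : MeasurableSet T := (isClosed_le continuous_const continuous_abs).measurableSet
  set A : ℝ≥0∞ := ENNReal.ofReal (8 / α) with hAdef
  have hA0 : A ≠ 0 := by
    simp only [hAdef, ne_eq, ENNReal.ofReal_eq_zero, not_le]
    positivity
  have hAtop : A ≠ ⊤ := ENNReal.ofReal_ne_top
  set K : ℝ → ℝ → ℝ≥0∞ := fun x z =>
    if (|x| ^ 2)⁻¹ ≤ |z - x| ∧ |z - x| ≤ 1 / 100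
    then ENNReal.ofReal ((|z - x| ^ (1 + α))⁻¹) else 0 with hKdef
  set w : ℝ → ℝ≥0∞ := fun z => ENNReal.ofReal (1 + |z| ^ (2 * α)) with hwdef
  have hwpos : ∀ z : ℝ, (0:ℝ) < 1 + |z| ^ (2 * α) := fun z => by positivity
  have hw0 : ∀ z, w z ≠ 0 := fun z => by
    simp only [hwdef, ne_eq, ENNReal.ofReal_eq_zero, not_le]; exact hwpos z
  have hwtop : ∀ z, w z ≠ ⊤ := fun z => ENNReal.ofReal_ne_top
  have hwm : Measurable w := by
    simp only [hwdef]
    exact ENNReal.measurable_ofReal.comp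
      (measurable_const.add ((measurable_id.abs).pow measurable_const))
  have hKm : Measurable fun r : ℝ × ℝ => K r.1 r.2 := by
    simp only [hKdef]
    have hs : MeasurableSet {r : ℝ × ℝ | (|r.1| ^ 2)⁻¹ ≤ |r.2 - r.1| ∧ |r.2 - r.1| ≤ 1 / 100} := by
      rw [Set.setOf_and]
      exact (measurableSet_le ((measurable_fst.abs.pow measurable_const).inv)
          ((measurable_snd.sub measurable_fst).abs)).inter
        (measurableSet_le ((measurable_snd.sub measurable_fst).abs) measurable_const)
    exact Measurable.ite hs
      (ENNReal.measurable_ofReal.comp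
        (((measurable_snd.sub measurable_fst).abs.pow measurable_const).inv))
      measurable_const
  have hKxm : ∀ x : ℝ, Measurable fun z => K x z :=
    fun x => hKm.comp (measurable_const.prodMk measurable_id)
  have hKzm : ∀ z : ℝ, Measurable fun x => K x z :=
    fun z => hKm.comp (measurable_id.prodMk measurable_const)
  set Ft : ℝ → ℝ≥0∞ := fun z =>
    (‖f' z‖₊ : ℝ≥0∞) + (‖((|z| ^ (2 * α) : ℝ) : ℂ) * f' z‖₊ : ℝ≥0∞) with hFtdef
  have hFt_eq : ∀ z, Ft z = w z * (‖f' z‖₊ : ℝ≥0∞) := by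
    intro z
    have h1 : (‖((|z| ^ (2 * α) : ℝ) : ℂ) * f' z‖₊ : ℝ≥0∞)
        = ENNReal.ofReal (|z| ^ (2 * α)) * (‖f' z‖₊ : ℝ≥0∞) := by
      rw [nnnorm_mul, ENNReal.coe_mul, Complex.nnnorm_real,
        ← enorm_eq_nnnorm (|z| ^ (2 * α)), Real.enorm_eq_ofReal (by positivity)]
    simp only [hFtdef, hwdef, h1]
    rw [ENNReal.ofReal_add zero_le_one (by positivity), ENNReal.ofReal_one, add_mul, one_mul]
  have hFtm : Measurable Ft := by
    simp only [hFtdef]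
    exact hf'm.enorm.add
      ((Complex.measurable_ofReal.comp ((measurable_id.abs).pow measurable_const)).mul
        hf'm).enorm
  -- Step 1: pointwise bound
  have hstep1 : ∀ x : ℝ, x ∈ T →
      (‖(∫ y in {y : ℝ | (|x| ^ 2)⁻¹ ≤ |y| ∧ |y| ≤ 1 / 100},
          ‖f' (x + y)‖ / |y| ^ (1 + α))‖₊ : ℝ≥0∞)
        ≤ ∫⁻ z, K x z * (‖f' z‖₊ : ℝ≥0∞) := by
    intro x _hx
    refine le_trans (enorm_integral_le_lintegral_enorm _) ?_
    have hSx : MeasurableSet {y : ℝ | (|x| ^ 2)⁻¹ ≤ |y| ∧ |y| ≤ 1 / 100} := by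
      rw [Set.setOf_and]
      exact (measurableSet_le measurable_const measurable_abs).inter
        (measurableSet_le measurable_abs measurable_const)
    rw [← lintegral_indicator hSx]
    have hkey : ∀ y : ℝ,
        {y : ℝ | (|x| ^ 2)⁻¹ ≤ |y| ∧ |y| ≤ 1 / 100}.indicator
          (fun y => (‖(‖f' (x + y)‖ / |y| ^ (1 + α) : ℝ)‖₊ : ℝ≥0∞)) y
          = K x (x + y) * (‖f' (x + y)‖₊ : ℝ≥0∞) := by
      intro y
      have hxy : x + y - x = y := by ring
      by_cases hy : (|x| ^ 2)⁻¹ ≤ |y| ∧ |y| ≤ 1 / 100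
      · rw [Set.indicator_of_mem
          (show y ∈ {y : ℝ | (|x| ^ 2)⁻¹ ≤ |y| ∧ |y| ≤ 1 / 100} from hy)]
        simp only [hKdef, hxy]
        rw [if_pos hy, div_eq_mul_inv,
          ← enorm_eq_nnnorm (‖f' (x + y)‖ * (|y| ^ (1 + α))⁻¹), Real.enorm_eq_ofReal (by positivity),
          ENNReal.ofReal_mul (norm_nonneg _), ofReal_norm, mul_comm]
        rfl
      · rw [Set.indicator_of_notMem
          (show y ∉ {y : ℝ | (|x| ^ 2)⁻¹ ≤ |y| ∧ |y| ≤ 1 / 100} from hy)]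
        simp only [hKdef, hxy]
        rw [if_neg hy, zero_mul]
    refine le_of_eq ?_
    refine (lintegral_congr hkey).trans ?_
    exact lintegral_add_left_eq_self (fun z => K x z * (‖f' z‖₊ : ℝ≥0∞)) x
  -- Row bound
  have hrow : ∀ x : ℝ, x ∈ T → ∫⁻ z, K x z * (w z)⁻¹ ≤ A := by
    intro x hx
    have hx100 : (100:ℝ) ≤ |x| := hx
    have hxpos : (0:ℝ) < |x| := by linarith
    have hb : (0:ℝ) < (|x| / 2) ^ (2 * α) := by positivity
    have hpt : ∀ z : ℝ, K x z * (w z)⁻¹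
        ≤ K x z * ENNReal.ofReal (((|x| / 2) ^ (2 * α))⁻¹) := by
      intro z
      rcases eq_or_ne (K x z) 0 with h0 | h0
      · simp [h0]
      · have hcond : (|x| ^ 2)⁻¹ ≤ |z - x| ∧ |z - x| ≤ 1 / 100 := by
          by_contra hc
          apply h0
          simp only [hKdef]
          rw [if_neg hc]
        have hz2 : |x| / 2 ≤ |z| := by
          have h1 : |x| - |z| ≤ |x - z| := abs_sub_abs_le_abs_sub x z
          have h2 : |x - z| ≤ 1 / 100 := by rw [abs_sub_comm]; exact hcond.2
          linarith
        refine mul_le_mul_right ?_ _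
        rw [ENNReal.ofReal_inv_of_pos hb]
        refine ENNReal.inv_le_inv' (ENNReal.ofReal_le_ofReal ?_)
        calc (|x| / 2) ^ (2 * α) ≤ |z| ^ (2 * α) :=
              Real.rpow_le_rpow (by positivity) hz2 (by positivity)
          _ ≤ 1 + |z| ^ (2 * α) := by linarith
      -- end hpt
    have hKbound : ∫⁻ z, K x z
        ≤ ENNReal.ofReal (2 / α * ((|x| ^ 2)⁻¹) ^ (-α)) := by
      have ha : (0:ℝ) < (|x| ^ 2)⁻¹ := by positivity
      refine le_trans (lintegral_mono fun z => ?_)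
        (lint_shift α ((|x| ^ 2)⁻¹) hα0 ha x)
      simp only [hKdef]
      by_cases hc : (|x| ^ 2)⁻¹ ≤ |z - x| ∧ |z - x| ≤ 1 / 100
      · rw [if_pos hc, Set.indicator_of_mem
          (show z ∈ {w : ℝ | (|x| ^ 2)⁻¹ ≤ |w - x|} from hc.1)]
      · rw [if_neg hc]
        exact zero_le
    calc ∫⁻ z, K x z * (w z)⁻¹
        ≤ ∫⁻ z, K x z * ENNReal.ofReal (((|x| / 2) ^ (2 * α))⁻¹) := lintegral_mono hpt
      _ = (∫⁻ z, K x z) * ENNReal.ofReal (((|x| / 2) ^ (2 * α))⁻¹) :=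
          lintegral_mul_const _ (hKxm x)
      _ ≤ ENNReal.ofReal (2 / α * ((|x| ^ 2)⁻¹) ^ (-α))
            * ENNReal.ofReal (((|x| / 2) ^ (2 * α))⁻¹) := by gcongr
      _ ≤ A := by
          rw [← ENNReal.ofReal_mul (by positivity), hAdef]
          apply ENNReal.ofReal_le_ofReal
          rw [inv_sq_rpow α |x| hxpos]
          have hdiv : |x| / (|x| / 2) = 2 := by field_simp
          have h2 : |x| ^ (2 * α) * ((|x| / 2) ^ (2 * α))⁻¹ = (2:ℝ) ^ (2 * α) := by
            rw [← div_eq_mul_inv, ← Real.div_rpow (abs_nonneg x) (by positivity), hdiv]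
          have h3 : (2:ℝ) ^ (2 * α) ≤ 4 := by
            have := Real.rpow_le_rpow_of_exponent_le (one_le_two) (by linarith : 2 * α ≤ 2)
            rwa [show ((2:ℝ) ^ (2:ℝ)) = 4 by
              rw [show (2:ℝ) = ((2:ℕ):ℝ) by norm_num, Real.rpow_natCast]; norm_num] at this
          calc 2 / α * |x| ^ (2 * α) * ((|x| / 2) ^ (2 * α))⁻¹
              = 2 / α * (|x| ^ (2 * α) * ((|x| / 2) ^ (2 * α))⁻¹) := by ring
            _ = 2 / α * (2:ℝ) ^ (2 * α) := by rw [h2]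
            _ ≤ 2 / α * 4 := by
                have h4 : (0:ℝ) ≤ 2 / α := by positivity
                nlinarith
            _ = 8 / α := by ring
  -- Column bound
  have hcol : ∀ z : ℝ, (∫⁻ x in T, K x z) * (w z)⁻¹ ≤ A := by
    intro z
    have hr0 : (0:ℝ) ≤ |z| := abs_nonneg z
    have hapos : (0:ℝ) < ((|z| + 1 / 100) ^ 2)⁻¹ := by positivity
    have htpos : (0:ℝ) < |z| + 1 / 100 := by positivity
    have hKle : ∀ x ∈ T, K x z
        ≤ {w : ℝ | ((|z| + 1 / 100) ^ 2)⁻¹ ≤ |w - z|}.indicator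
            (fun w => ENNReal.ofReal ((|w - z| ^ (1 + α))⁻¹)) x := by
      intro x hxT
      have hx100 : (100:ℝ) ≤ |x| := hxT
      have hxpos : (0:ℝ) < |x| := by linarith
      simp only [hKdef]
      by_cases hc : (|x| ^ 2)⁻¹ ≤ |z - x| ∧ |z - x| ≤ 1 / 100
      · rw [if_pos hc]
        have hxz : |x - z| = |z - x| := abs_sub_comm x z
        have hxb : |x| ≤ |z| + 1 / 100 := by
          have h1 : |x| - |z| ≤ |x - z| := abs_sub_abs_le_abs_sub x z
          rw [hxz] at h1
          linarith [hc.2]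
        have hmem : ((|z| + 1 / 100) ^ 2)⁻¹ ≤ |x - z| := by
          rw [hxz]
          refine le_trans ?_ hc.1
          have hsq : |x| ^ 2 ≤ (|z| + 1 / 100) ^ 2 := by nlinarith
          exact inv_anti₀ (by positivity) hsq
        rw [Set.indicator_of_mem
          (show x ∈ {w : ℝ | ((|z| + 1 / 100) ^ 2)⁻¹ ≤ |w - z|} from hmem), hxz]
      · rw [if_neg hc]
        exact zero_le
    have hindm : Measurable ({w : ℝ | ((|z| + 1 / 100) ^ 2)⁻¹ ≤ |w - z|}.indicator
        (fun w => ENNReal.ofReal ((|w - z| ^ (1 + α))⁻¹))) := by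
      refine Measurable.indicator ?_ ?_
      · exact ENNReal.measurable_ofReal.comp
          (((measurable_id.sub measurable_const).abs.pow measurable_const).inv)
      · exact measurableSet_le measurable_const ((measurable_id.sub measurable_const).abs)
    have hKint : ∫⁻ x in T, K x z
        ≤ ENNReal.ofReal (2 / α * (((|z| + 1 / 100) ^ 2)⁻¹) ^ (-α)) := by
      refine le_trans (le_trans (setLIntegral_mono hindm hKle) ?_)
        (lint_shift α (((|z| + 1 / 100) ^ 2)⁻¹) hα0 hapos z)
      exact setLIntegral_le_lintegral _ _
    have hwinv : (w z)⁻¹ = ENNReal.ofReal ((1 + |z| ^ (2 * α))⁻¹) := by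
      rw [hwdef]; exact (ENNReal.ofReal_inv_of_pos (hwpos z)).symm
    calc (∫⁻ x in T, K x z) * (w z)⁻¹
        ≤ ENNReal.ofReal (2 / α * (((|z| + 1 / 100) ^ 2)⁻¹) ^ (-α))
            * ENNReal.ofReal ((1 + |z| ^ (2 * α))⁻¹) := by rw [hwinv]; gcongr
      _ ≤ A := by
          rw [← ENNReal.ofReal_mul (by positivity), hAdef]
          apply ENNReal.ofReal_le_ofReal
          rw [inv_sq_rpow α (|z| + 1 / 100) htpos]
          have hkey : (|z| + 1 / 100) ^ (2 * α) ≤ 4 * (1 + |z| ^ (2 * α)) := by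
            have h1 : (|z| + 1 / 100) ^ (2 * α) ≤ (1 + |z|) ^ (2 * α) :=
              Real.rpow_le_rpow (by positivity) (by linarith) (by positivity)
            have h2 : (1 + |z|) ^ (2 * α) ≤ 4 * (1 + |z| ^ (2 * α)) := by
              rcases le_total |z| 1 with hz1 | hz1
              · have h3 : (1 + |z|) ^ (2 * α) ≤ (2:ℝ) ^ (2 * α) :=
                  Real.rpow_le_rpow (by positivity) (by linarith) (by positivity)
                have h4 : (2:ℝ) ^ (2 * α) ≤ 4 := by
                  have := Real.rpow_le_rpow_of_exponent_le (one_le_two)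
                    (by linarith : 2 * α ≤ 2)
                  rwa [show ((2:ℝ) ^ (2:ℝ)) = 4 by
                    rw [show (2:ℝ) = ((2:ℕ):ℝ) by norm_num, Real.rpow_natCast];
                    norm_num] at this
                nlinarith [Real.rpow_nonneg (abs_nonneg z) (2 * α)]
              · have h3 : (1 + |z|) ^ (2 * α) ≤ (2 * |z|) ^ (2 * α) :=
                  Real.rpow_le_rpow (by positivity) (by linarith) (by positivity)
                have h4 : (2 * |z|) ^ (2 * α) = (2:ℝ) ^ (2 * α) * |z| ^ (2 * α) :=
                  Real.mul_rpow (by norm_num) hr0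
                have h5 : (2:ℝ) ^ (2 * α) ≤ 4 := by
                  have := Real.rpow_le_rpow_of_exponent_le (one_le_two)
                    (by linarith : 2 * α ≤ 2)
                  rwa [show ((2:ℝ) ^ (2:ℝ)) = 4 by
                    rw [show (2:ℝ) = ((2:ℕ):ℝ) by norm_num, Real.rpow_natCast];
                    norm_num] at this
                nlinarith [Real.rpow_nonneg (abs_nonneg z) (2 * α)]
            linarith
          have hs : (0:ℝ) < 1 + |z| ^ (2 * α) := hwpos z
          calc 2 / α * (|z| + 1 / 100) ^ (2 * α) * (1 + |z| ^ (2 * α))⁻¹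
              ≤ 2 / α * (4 * (1 + |z| ^ (2 * α))) * (1 + |z| ^ (2 * α))⁻¹ := by
                have h7 : (0:ℝ) ≤ (1 + |z| ^ (2 * α))⁻¹ := by positivity
                have h6 : (0:ℝ) ≤ 2 / α := by positivity
                exact mul_le_mul_of_nonneg_right
                  (mul_le_mul_of_nonneg_left hkey h6) h7
            _ = 8 / α := by
                have hs' : (1 + |z| ^ (2 * α)) ≠ 0 := ne_of_gt hs
                field_simp
                ring

  -- conjugate exponent
  set q' : ℝ := Real.conjExponent q with hq'def
  have hqq' : q'.HolderConjugate q := (Real.HolderConjugate.conjExponent hq1).symm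
  have hq'0 : (0:ℝ) < q' := hqq'.pos
  have hinv_add : 1 / q' + 1 / q = 1 := by
    rw [one_div, one_div]; exact hqq'.inv_add_inv_eq_one
  have hqdiv : q - 1 = q / q' := (hqq'.symm.div_conj_eq_sub_one).symm
  -- Hölder step
  have hholder : ∀ x ∈ T, ∫⁻ z, K x z * (‖f' z‖₊ : ℝ≥0∞)
      ≤ A ^ (1 / q') * (∫⁻ z, (K x z * (w z)⁻¹) * Ft z ^ q) ^ (1 / q) := by
    intro x hx
    have hκm : Measurable fun z => K x z * (w z)⁻¹ := (hKxm x).mul hwm.inv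
    have hsplit : ∀ z : ℝ, K x z * (‖f' z‖₊ : ℝ≥0∞)
        = ((K x z * (w z)⁻¹) ^ (1 / q')) * ((K x z * (w z)⁻¹) ^ (1 / q) * Ft z) := by
      intro z
      have h1 : (K x z * (w z)⁻¹) ^ (1 / q') * (K x z * (w z)⁻¹) ^ (1 / q)
          = K x z * (w z)⁻¹ := by
        rw [← ENNReal.rpow_add_of_nonneg _ _ (by positivity) (by positivity), hinv_add,
          ENNReal.rpow_one]
      calc K x z * (‖f' z‖₊ : ℝ≥0∞) = (K x z * (w z)⁻¹) * Ft z := by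
            rw [hFt_eq z, mul_assoc, ← mul_assoc ((w z)⁻¹),
              ENNReal.inv_mul_cancel (hw0 z) (hwtop z), one_mul]
        _ = ((K x z * (w z)⁻¹) ^ (1 / q')) * ((K x z * (w z)⁻¹) ^ (1 / q) * Ft z) := by
            rw [← mul_assoc, h1]
    rw [lintegral_congr hsplit]
    have hκp : ∀ c : ℝ, Measurable fun z => (K x z * (w z)⁻¹) ^ c := fun c =>
      hκm.pow (measurable_const : Measurable fun _ : ℝ => c)
    have hH := ENNReal.lintegral_mul_le_Lp_mul_Lq volume hqq'
      (hκp (1 / q')).aemeasurable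
      ((hκp (1 / q)).mul hFtm).aemeasurable
    have he1 : (∫⁻ z, ((K x z * (w z)⁻¹) ^ (1 / q')) ^ q') = ∫⁻ z, K x z * (w z)⁻¹ := by
      refine lintegral_congr fun z => ?_
      rw [← ENNReal.rpow_mul, one_div_mul_cancel hq'0.ne', ENNReal.rpow_one]
    have he2 : (∫⁻ z, ((K x z * (w z)⁻¹) ^ (1 / q) * Ft z) ^ q)
        = ∫⁻ z, (K x z * (w z)⁻¹) * Ft z ^ q := by
      refine lintegral_congr fun z => ?_
      rw [ENNReal.mul_rpow_of_nonneg _ _ hq0.le, ← ENNReal.rpow_mul,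
        one_div_mul_cancel hq0.ne', ENNReal.rpow_one]
    simp only [Pi.mul_apply] at hH
    rw [he1, he2] at hH
    refine le_trans hH ?_
    gcongr
    exact hrow x hx
  -- main estimate
  have hmain : (∫⁻ x in T, (‖(∫ y in {y : ℝ | (|x| ^ 2)⁻¹ ≤ |y| ∧ |y| ≤ 1 / 100},
        ‖f' (x + y)‖ / |y| ^ (1 + α))‖₊ : ℝ≥0∞) ^ q)
      ≤ A ^ q * ∫⁻ z, Ft z ^ q := by
    have hb1 : ∀ x ∈ T, (‖(∫ y in {y : ℝ | (|x| ^ 2)⁻¹ ≤ |y| ∧ |y| ≤ 1 / 100},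
          ‖f' (x + y)‖ / |y| ^ (1 + α))‖₊ : ℝ≥0∞) ^ q
        ≤ A ^ (q - 1) * ∫⁻ z, (K x z * (w z)⁻¹) * Ft z ^ q := by
      intro x hx
      have h1 := (hstep1 x hx).trans (hholder x hx)
      calc (‖(∫ y in {y : ℝ | (|x| ^ 2)⁻¹ ≤ |y| ∧ |y| ≤ 1 / 100},
            ‖f' (x + y)‖ / |y| ^ (1 + α))‖₊ : ℝ≥0∞) ^ q
          ≤ (A ^ (1 / q') * (∫⁻ z, (K x z * (w z)⁻¹) * Ft z ^ q) ^ (1 / q)) ^ q :=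
            ENNReal.rpow_le_rpow h1 hq0.le
        _ = A ^ (q - 1) * ∫⁻ z, (K x z * (w z)⁻¹) * Ft z ^ q := by
            rw [ENNReal.mul_rpow_of_nonneg _ _ hq0.le, ← ENNReal.rpow_mul,
              ← ENNReal.rpow_mul,
              show (1 / q') * q = q - 1 by rw [hqdiv]; ring,
              show (1 / q) * q = 1 from one_div_mul_cancel hq0.ne', ENNReal.rpow_one]
    have hswapmeas : AEMeasurable
        (Function.uncurry fun x z => (K x z * (w z)⁻¹) * Ft z ^ q)
        ((volume.restrict T).prod volume) := by
      refine Measurable.aemeasurable ?_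
      have : (Function.uncurry fun x z => (K x z * (w z)⁻¹) * Ft z ^ q)
          = fun r : ℝ × ℝ => (K r.1 r.2 * (w r.2)⁻¹) * Ft r.2 ^ q := rfl
      rw [this]
      exact (hKm.mul ((hwm.comp measurable_snd).inv)).mul
        ((hFtm.comp measurable_snd).pow measurable_const)
    calc ∫⁻ x in T, (‖(∫ y in {y : ℝ | (|x| ^ 2)⁻¹ ≤ |y| ∧ |y| ≤ 1 / 100},
          ‖f' (x + y)‖ / |y| ^ (1 + α))‖₊ : ℝ≥0∞) ^ q
        ≤ ∫⁻ x in T, (A ^ (q - 1) * ∫⁻ z, (K x z * (w z)⁻¹) * Ft z ^ q) :=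
          lintegral_mono_ae ((ae_restrict_mem hT).mono hb1)
      _ = A ^ (q - 1) * ∫⁻ x in T, (∫⁻ z, (K x z * (w z)⁻¹) * Ft z ^ q) :=
          lintegral_const_mul' _ _ (ENNReal.rpow_ne_top_of_nonneg (by linarith) hAtop)
      _ = A ^ (q - 1) * ∫⁻ z, (∫⁻ x in T, (K x z * (w z)⁻¹) * Ft z ^ q) := by
          rw [lintegral_lintegral_swap hswapmeas]
      _ ≤ A ^ (q - 1) * ∫⁻ z, A * Ft z ^ q := by
          refine mul_le_mul_right (lintegral_mono fun z => ?_) _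
          calc ∫⁻ x in T, (K x z * (w z)⁻¹) * Ft z ^ q
              = (∫⁻ x in T, K x z * (w z)⁻¹) * Ft z ^ q :=
                lintegral_mul_const _ ((hKzm z).mul measurable_const)
            _ = ((∫⁻ x in T, K x z) * (w z)⁻¹) * Ft z ^ q := by
                rw [lintegral_mul_const _ (hKzm z)]
            _ ≤ A * Ft z ^ q := mul_le_mul_left (hcol z) _
      _ = A ^ (q - 1) * (A * ∫⁻ z, Ft z ^ q) := by rw [lintegral_const_mul' _ _ hAtop]
      _ = A ^ q * ∫⁻ z, Ft z ^ q := by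
          rw [← mul_assoc]
          congr 1
          nth_rewrite 2 [← ENNReal.rpow_one A]
          rw [← ENNReal.rpow_add_of_nonneg _ _ (by linarith) zero_le_one]
          norm_num
  -- conclude
  rw [eLpNorm_eq_lintegral_rpow_enorm_toReal hp0 hp', ← hqdef]
  have hfinal1 : (∫⁻ x in T, (‖(∫ y in {y : ℝ | (|x| ^ 2)⁻¹ ≤ |y| ∧ |y| ≤ 1 / 100},
        ‖f' (x + y)‖ / |y| ^ (1 + α))‖₊ : ℝ≥0∞) ^ q) ^ (1 / q)
      ≤ A * (∫⁻ z, Ft z ^ q) ^ (1 / q) := by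
    refine le_trans (ENNReal.rpow_le_rpow hmain (by positivity)) (le_of_eq ?_)
    rw [ENNReal.mul_rpow_of_nonneg _ _ (by positivity), ← ENNReal.rpow_mul,
      mul_one_div_cancel hq0.ne', ENNReal.rpow_one]
  refine le_trans hfinal1 ?_
  refine mul_le_mul_right ?_ A
  rw [eLpNorm_eq_lintegral_rpow_enorm_toReal hp0 hp', eLpNorm_eq_lintegral_rpow_enorm_toReal hp0 hp',
    ← hqdef]
  have hg'm : Measurable fun z : ℝ => ((|z| ^ (2 * α) : ℝ) : ℂ) * f' z :=
    (Complex.measurable_ofReal.comp ((measurable_id.abs).pow measurable_const)).mul hf'm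
  simp only [hFtdef]
  exact ENNReal.lintegral_Lp_add_le hf'm.enorm.aemeasurable
    hg'm.enorm.aemeasurable hq1.le
end
end
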